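/- arXiv:2203.03142 — 6 statements merged into one kernel-verified Lean document; each statement's English description precedes it below -/
import Mathlib

section
/- Let r ≥ 2 and let G be a K_{r+1}-free graph on n vertices. For integers i, j with 1 ≤ i ≤ j ≤ r, we have (k_j(G)/C(r,j))^{1/j} ≤ (k_i(G)/C(r,i))^{1/i}, where k_m(G) denotes the number of copies of K_m in G. -/
open SimpleGraph Matrix
open scoped Classical

/-- `G` contains no copy of `F`, i.e. no subgraph of `G` is isomorphic to `F`:
there is no injective graph homomorphism from `F` into `G`. -/
def IsFFree {α β : Type*} (F : SimpleGraph α) (G : SimpleGraph β) : Prop :=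
  ¬ ∃ f : F →g G, Function.Injective f

/-- The real adjacency matrix of a graph on `Fin n`. -/
noncomputable def adjMat {n : ℕ} (G : SimpleGraph (Fin n)) : Matrix (Fin n) (Fin n) ℝ :=
  Matrix.of fun i j => if G.Adj i j then 1 else 0

/-- The spectral radius of a graph: the largest real eigenvalue of its adjacency matrix. -/
noncomputable def specRad {n : ℕ} (G : SimpleGraph (Fin n)) : ℝ :=
  sSup {μ : ℝ | ∃ x : Fin n → ℝ, x ≠ 0 ∧ adjMat G *ᵥ x = μ • x}

/-- The edit distance between two graphs on the same `n`-element vertex set. -/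
noncomputable def editDist {n : ℕ} (G H : SimpleGraph (Fin n)) : ℕ :=
  sInf {k : ℕ | ∃ H' : SimpleGraph (Fin n), Nonempty (H' ≃g H) ∧
    (symmDiff G.edgeSet H'.edgeSet).ncard = k}

/-- `cliqueCount G s` is the number of copies of `K_s` in `G`. -/
noncomputable def cliqueCount {n : ℕ} (G : SimpleGraph (Fin n)) (s : ℕ) : ℕ :=
  {S : Finset (Fin n) | G.IsNClique s S}.ncard

/-- A graph is color-critical if deleting some edge decreases the chromatic number. -/
def ColorCritical {α : Type*} (F : SimpleGraph α) : Prop :=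
  ∃ e ∈ F.edgeSet, (F.deleteEdges {e}).chromaticNumber < F.chromaticNumber

/-- The `p`-spectral radius of a graph on `Fin n`. -/
noncomputable def pSpecRad {n : ℕ} (p : ℝ) (G : SimpleGraph (Fin n)) : ℝ :=
  sSup {t : ℝ | ∃ x : Fin n → ℝ, (∑ i, |x i| ^ p) = 1 ∧
    t = ∑ i, ∑ j, if G.Adj i j then x i * x j else 0}

/-- The minimum degree of a graph on `Fin n`. -/
noncomputable def minDeg {n : ℕ} (G : SimpleGraph (Fin n)) : ℕ :=
  sInf (Set.range fun v => {u | G.Adj v u}.ncard)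

/-- The clique number of a graph. -/
noncomputable def cliqueNum {n : ℕ} (G : SimpleGraph (Fin n)) : ℕ :=
  sSup {k : ℕ | ∃ S : Finset (Fin n), G.IsNClique k S}

/-- `G` is `K_{r+1}`-saturated: it is `K_{r+1}`-free but adding any missing edge
creates a copy of `K_{r+1}`. -/
def KSaturated (r : ℕ) {V : Type*} (G : SimpleGraph V) : Prop :=
  G.CliqueFree (r + 1) ∧
    ∀ v w : V, v ≠ w → ¬ G.Adj v w →
      ¬ (G ⊔ SimpleGraph.fromEdgeSet {s(v, w)}).CliqueFree (r + 1)


/-!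
Weight the vertices by `x ≥ 0` and let `P_k(x)` be the sum, over the `k`-cliques, of the product
of the weights, so that `P_k(1) = k_k(G)`. If the support of `x` is a clique, it has at most `r`
vertices, `P_k(x)` is the `k`-th elementary symmetric function of `r` numbers (pad with zeros),
and the claim is Maclaurin's inequality. Otherwise pick nonadjacent `u, v` in the support: no
clique contains both, so `P_i` and `P_j` are affine in `(x u, x v)`. Moving along the segment on
which `P_j` is constant to one of its endpoints does not increase `P_i` and kills `x u` or `x v`,
so induction on the size of the support applies.

Maclaurin's inequality `E_j ^ (1/j) ≤ E_i ^ (1/i)` for the normalised means `E_k = e_k / C(n, k)`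
of `n` nonnegative numbers is proved by induction on `n`. The means `E_k`, `k < n`, do not change
when `∏ (X + a)` is replaced by its derivative, whose roots are real by Rolle's theorem and
nonpositive; the remaining case `E_n ^ (1/n) ≤ E_(n-1) ^ (1/(n-1))` is AM-GM applied to the `n`
products of `n - 1` of the numbers.
-/

namespace Multiset

lemma esymm_zero_cons {R : Type*} [CommSemiring R] (s : Multiset R) (k : ℕ) :
    (0 ::ₘ s).esymm k = s.esymm k := by
  cases k with
  | zero => simp [esymm]
  | succ k => simp [esymm, powersetCard_cons]

lemma esymm_add_replicate_zero {R : Type*} [CommSemiring R] (s : Multiset R) (m k : ℕ) :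
    (s + replicate m 0).esymm k = s.esymm k := by
  induction m with
  | zero => simp
  | succ m ih => rw [replicate_succ, add_cons, esymm_zero_cons, ih]

lemma esymm_nonneg {R : Type*} [CommSemiring R] [PartialOrder R] [IsOrderedRing R]
    {s : Multiset R} (hs : ∀ a ∈ s, 0 ≤ a) (k : ℕ) : 0 ≤ s.esymm k := by
  refine sum_nonneg fun p hp => ?_
  obtain ⟨t, ht, rfl⟩ := mem_map.1 hp
  exact prod_nonneg fun a ha => hs a (mem_of_le (mem_powersetCard.1 ht).1 ha)

lemma prod_map_prod_powersetCard_of_card_eq_succ {M : Type*} [CommMonoid M] {s : Multiset M}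
    {k : ℕ} (hs : card s = k + 1) : ((s.powersetCard k).map prod).prod = s.prod ^ k := by
  induction s using Multiset.induction generalizing k with
  | empty => simp at hs
  | cons a s ih =>
    rw [card_cons, Nat.add_right_cancel_iff] at hs
    cases k with
    | zero => simp
    | succ k =>
      rw [powersetCard_cons, ← hs, powersetCard_self, hs, map_add, prod_add, map_map]
      have : ((s.powersetCard k).map (prod ∘ cons a)).prod = a ^ (k + 1) * s.prod ^ k := by
        simp only [Function.comp_def, prod_cons, prod_map_mul, map_const', prod_replicate,
          card_powersetCard, hs, Nat.choose_succ_self_right, ih hs]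
      rw [this, map_singleton, prod_singleton, prod_cons, mul_pow, pow_succ' s.prod,
        mul_left_comm]

lemma prod_rpow_inv_card_le_sum_div_card {s : Multiset ℝ} (hs : ∀ a ∈ s, 0 ≤ a) (hne : s ≠ 0) :
    s.prod ^ ((card s : ℝ)⁻¹) ≤ s.sum / card s := by
  have hcard : (0 : ℝ) < card s := by exact_mod_cast card_pos.2 hne
  have := Real.geom_mean_le_arith_mean Finset.univ (fun _ : s => (1 : ℝ)) (fun x => (x : ℝ))
    (fun _ _ => zero_le_one) (by simpa using hcard) (fun _ _ => hs _ coe_mem)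
  simpa [← prod_eq_prod_coe, ← sum_eq_sum_coe] using this

end Multiset

namespace Polynomial

lemma coeff_natDegree_sub_eq_leadingCoeff_mul_esymm {R : Type*} [CommRing R] [IsDomain R]
    {p : R[X]} (hroots : Multiset.card p.roots = p.natDegree) {k : ℕ} (hk : k ≤ p.natDegree) :
    p.coeff (p.natDegree - k) = p.leadingCoeff * (p.roots.map Neg.neg).esymm k := by
  rw [coeff_eq_esymm_roots_of_card hroots (Nat.sub_le _ _), Nat.sub_sub_self hk,
    Multiset.esymm_neg, mul_assoc]

lemma eval_pos_of_coeff_nonneg {R : Type*} [Semiring R] [PartialOrder R] [IsStrictOrderedRing R]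
    {p : R[X]} (hp : ∀ m, 0 ≤ p.coeff m) (hp0 : p ≠ 0) {x : R} (hx : 0 < x) : 0 < p.eval x := by
  rw [eval_eq_sum_range]
  refine Finset.sum_pos' (fun m _ => mul_nonneg (hp m) (pow_nonneg hx.le m))
    ⟨p.natDegree, Finset.self_mem_range_succ _, mul_pos ?_ (pow_pos hx _)⟩
  exact (hp _).lt_of_ne' (leadingCoeff_ne_zero.2 hp0)

end Polynomial

namespace Multiset

open Polynomial

noncomputable def esymmMean (s : Multiset ℝ) (k : ℕ) : ℝ := s.esymm k / (card s).choose k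

lemma esymmMean_succ_rpow_le_of_card_eq_succ {s : Multiset ℝ} (hs : ∀ a ∈ s, 0 ≤ a) {k : ℕ}
    (hk : 1 ≤ k) (hcard : card s = k + 1) :
    s.esymmMean (k + 1) ^ ((1 : ℝ) / (k + 1 : ℕ)) ≤ s.esymmMean k ^ ((1 : ℝ) / k) := by
  set T := (s.powersetCard k).map prod
  have hT : ∀ a ∈ T, 0 ≤ a := by
    intro a ha
    obtain ⟨t, ht, rfl⟩ := mem_map.1 ha
    exact prod_nonneg fun b hb => hs b (mem_of_le (mem_powersetCard.1 ht).1 hb)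
  have hTcard : card T = k + 1 := by simp [T, hcard]
  have hprod : T.prod = s.prod ^ k := prod_map_prod_powersetCard_of_card_eq_succ hcard
  have hmean_top : s.esymmMean (k + 1) = s.prod := by
    simp [esymmMean, esymm, ← hcard, powersetCard_self]
  have hmean : s.esymmMean k = T.sum / card T := by simp [esymmMean, esymm, T, hcard]
  have amgm := prod_rpow_inv_card_le_sum_div_card hT (card_pos.1 (by omega))
  rw [← hmean, hprod, hTcard] at amgm
  have hsprod : 0 ≤ s.prod := prod_nonneg hs
  calc s.esymmMean (k + 1) ^ ((1 : ℝ) / (k + 1 : ℕ))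
      = ((s.prod ^ k) ^ ((k + 1 : ℕ) : ℝ)⁻¹) ^ ((1 : ℝ) / k) := by
        rw [hmean_top, ← Real.rpow_natCast, ← Real.rpow_mul hsprod, ← Real.rpow_mul hsprod]
        congr 1
        have : (k : ℝ) ≠ 0 := by exact_mod_cast (by omega : k ≠ 0)
        field_simp
    _ ≤ s.esymmMean k ^ ((1 : ℝ) / k) := by gcongr

lemma exists_esymmMean_eq_of_card_eq_succ {s : Multiset ℝ} (hs : ∀ a ∈ s, 0 ≤ a) {n : ℕ}
    (hcard : card s = n + 1) :
    ∃ t : Multiset ℝ, (∀ a ∈ t, 0 ≤ a) ∧ card t = n ∧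
      ∀ k ≤ n, t.esymmMean k = s.esymmMean k := by
  set f : ℝ[X] := (s.map fun a => X + C a).prod
  have hf : f = ((s.map Neg.neg).map fun a => X - C a).prod := by
    simp [f, map_map, sub_eq_add_neg]
  have hf_roots : f.roots = s.map Neg.neg := by rw [hf, roots_multiset_prod_X_sub_C]
  have hf_deg : f.natDegree = n + 1 := by
    rw [hf, natDegree_multiset_prod_X_sub_C_eq_card, card_map, hcard]
  have hf_lc : f.leadingCoeff = 1 := by
    rw [hf]; exact (monic_multiset_prod_of_monic _ _ fun a _ => monic_X_sub_C a).leadingCoeff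
  have hf_coeff : ∀ k ≤ n + 1, f.coeff (n + 1 - k) = s.esymm k := by
    intro k hk
    simpa [hf_deg, hf_lc, hf_roots, map_map] using
      coeff_natDegree_sub_eq_leadingCoeff_mul_esymm (p := f)
        (by rw [hf_roots, card_map, hcard, hf_deg]) (hf_deg ▸ hk)
  have hf_nonneg : ∀ m, 0 ≤ f.coeff m := by
    intro m
    rcases le_or_gt m (n + 1) with hm | hm
    · rw [← Nat.sub_sub_self hm, hf_coeff _ (Nat.sub_le _ _)]
      exact esymm_nonneg hs _
    · rw [coeff_eq_zero_of_natDegree_lt (hf_deg ▸ hm)]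
  set g := derivative f
  -- Rolle's theorem: `f` has `n + 1` real roots, so `g` has `n`.
  have hg_deg : g.natDegree = n ∧ card g.roots = n := by
    have h1 : card f.roots ≤ card g.roots + 1 := card_roots_le_derivative f
    have h2 : card g.roots ≤ g.natDegree := card_roots' g
    have h3 : g.natDegree ≤ f.natDegree - 1 := natDegree_derivative_le f
    rw [hf_roots, card_map, hcard] at h1
    omega
  have hg_lc : g.leadingCoeff = n + 1 := by
    rw [leadingCoeff, hg_deg.1, coeff_derivative, ← hf_deg, coeff_natDegree, hf_lc, one_mul]
  have hg_nonneg : ∀ m, 0 ≤ g.coeff m := fun m => by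
    rw [coeff_derivative]; exact mul_nonneg (hf_nonneg _) (by positivity)
  refine ⟨g.roots.map Neg.neg, ?_, by rw [card_map, hg_deg.2], fun k hk => ?_⟩
  · simp only [mem_map]
    rintro _ ⟨ρ, hρ, rfl⟩
    by_contra! hneg
    have hg0 : g ≠ 0 := fun h => by simp [h] at hg_lc; linarith
    exact (eval_pos_of_coeff_nonneg hg_nonneg hg0 (neg_neg_iff_pos.1 hneg)).ne'
      (isRoot_of_mem_roots hρ)
  · have hg_coeff_roots : g.coeff (n - k) = (n + 1) * (g.roots.map Neg.neg).esymm k := by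
      simpa [hg_deg.1, hg_lc] using coeff_natDegree_sub_eq_leadingCoeff_mul_esymm (p := g)
        (by rw [hg_deg.1, hg_deg.2]) (hg_deg.1 ▸ hk)
    have hg_coeff_deriv : g.coeff (n - k) = s.esymm k * ((n - k : ℕ) + 1) := by
      rw [coeff_derivative, show n - k + 1 = n + 1 - k by omega, hf_coeff k (by omega)]
    have hchoose : (n.choose k : ℝ) * (n + 1) = (n + 1).choose k * ((n - k : ℕ) + 1) := by
      exact_mod_cast (show n + 1 - k = n - k + 1 by omega) ▸ Nat.choose_mul_succ_eq n k
    rw [esymmMean, esymmMean, card_map, hg_deg.2, hcard,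
      div_eq_div_iff (by exact_mod_cast (Nat.choose_pos hk).ne')
        (by exact_mod_cast (Nat.choose_pos (by omega)).ne')]
    refine mul_right_cancel₀ (by positivity : (n : ℝ) + 1 ≠ 0) ?_
    linear_combination
      ((n + 1).choose k : ℝ) * (hg_coeff_roots.symm.trans hg_coeff_deriv) - s.esymm k * hchoose

lemma esymmMean_succ_rpow_le {s : Multiset ℝ} (hs : ∀ a ∈ s, 0 ≤ a) {k : ℕ} (hk : 1 ≤ k)
    (hks : k + 1 ≤ card s) :
    s.esymmMean (k + 1) ^ ((1 : ℝ) / (k + 1 : ℕ)) ≤ s.esymmMean k ^ ((1 : ℝ) / k) := by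
  obtain ⟨n, hn⟩ : ∃ n, card s = n + 1 := ⟨card s - 1, by omega⟩
  induction n generalizing s with
  | zero => omega
  | succ n ih =>
    rcases (show k = n + 1 ∨ k + 1 ≤ n + 1 by omega) with rfl | hkn
    · exact esymmMean_succ_rpow_le_of_card_eq_succ hs hk hn
    · obtain ⟨t, ht, htcard, hts⟩ := exists_esymmMean_eq_of_card_eq_succ hs hn
      rw [← hts k (by omega), ← hts (k + 1) hkn]
      exact ih ht (htcard ▸ hkn) htcard

theorem esymmMean_rpow_one_div_le {s : Multiset ℝ} (hs : ∀ a ∈ s, 0 ≤ a) {i j : ℕ} (hi : 1 ≤ i)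
    (hij : i ≤ j) (hj : j ≤ card s) :
    s.esymmMean j ^ ((1 : ℝ) / j) ≤ s.esymmMean i ^ ((1 : ℝ) / i) := by
  induction j, hij using Nat.le_induction with
  | base => rfl
  | succ j hij ih => exact (esymmMean_succ_rpow_le hs (hi.trans hij) hj).trans (ih (by omega))

end Multiset

-- A linear form on a segment is minimal at one of its endpoints.
lemma exists_mul_add_mul_eq_and_le {p q b c b' c' : ℝ} (hp : 0 ≤ p) (hq : 0 ≤ q) (hb : 0 ≤ b)
    (hc : 0 ≤ c) (hb' : 0 ≤ b') (hc' : 0 ≤ c') :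
    ∃ p' q', 0 ≤ p' ∧ 0 ≤ q' ∧ (p' = 0 ∨ q' = 0) ∧
      p' * b + q' * c = p * b + q * c ∧ p' * b' + q' * c' ≤ p * b' + q * c' := by
  wlog h : b' * c ≤ c' * b generalizing p q b c b' c'
  · obtain ⟨q', p', hq', hp', h0, heq, hle⟩ := this hq hp hc hb hc' hb' (by linarith)
    exact ⟨p', q', hp', hq', h0.symm, by linarith, by linarith⟩
  rcases hb.eq_or_lt with rfl | hb
  · exact ⟨0, q, le_rfl, hq, Or.inl rfl, by ring, by nlinarith [mul_nonneg hp hb']⟩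
  refine ⟨p + q * c / b, 0, by positivity, le_rfl, Or.inr rfl, by field_simp; ring, ?_⟩
  have : q * c / b * b' ≤ q * c' := by
    rw [div_mul_eq_mul_div, div_le_iff₀ hb]
    nlinarith [mul_le_mul_of_nonneg_left h hq]
  linarith [add_mul p (q * c / b) b']

namespace SimpleGraph

open Finset

lemma IsClique.card_le_of_cliqueFree {α : Type*} {G : SimpleGraph α} {r : ℕ}
    (hG : G.CliqueFree (r + 1)) {s : Finset α} (hs : G.IsClique (s : Set α)) : #s ≤ r := by
  by_contra! h
  obtain ⟨t, hts, ht⟩ := exists_subset_card_eq (show r + 1 ≤ #s by omega)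
  exact hG t ⟨hs.subset (coe_subset.2 hts), ht⟩

variable {V : Type*} [Fintype V] [DecidableEq V] (G : SimpleGraph V) [DecidableRel G.Adj]

noncomputable def cliqueWeight (k : ℕ) (x : V → ℝ) : ℝ :=
  ∑ S ∈ G.cliqueFinset k, ∏ v ∈ S, x v

noncomputable def cliqueWeightPartial (k : ℕ) (w : V) (x : V → ℝ) : ℝ :=
  ∑ S ∈ (G.cliqueFinset k).filter (w ∈ ·), ∏ v ∈ S.erase w, x v

lemma cliqueWeight_nonneg (k : ℕ) {x : V → ℝ} (hx : 0 ≤ x) : 0 ≤ G.cliqueWeight k x :=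
  sum_nonneg fun _ _ => prod_nonneg fun v _ => hx v

lemma cliqueWeightPartial_nonneg (k : ℕ) (w : V) {x : V → ℝ} (hx : 0 ≤ x) :
    0 ≤ G.cliqueWeightPartial k w x :=
  sum_nonneg fun _ _ => prod_nonneg fun v _ => hx v

lemma cliqueWeight_update (k : ℕ) (w : V) (a : ℝ) (x : V → ℝ) :
    G.cliqueWeight k (Function.update x w a) =
      G.cliqueWeight k (Function.update x w 0) + a * G.cliqueWeightPartial k w x := by
  have key : ∀ a, G.cliqueWeight k (Function.update x w a) =
      ∑ S ∈ (G.cliqueFinset k).filter (w ∉ ·), ∏ v ∈ S, x v +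
        a * G.cliqueWeightPartial k w x := by
    intro a
    rw [cliqueWeight, ← sum_filter_not_add_sum_filter _ (w ∈ ·), cliqueWeightPartial, mul_sum]
    congr 1
    · refine sum_congr rfl fun S hS => prod_congr rfl fun v hv => ?_
      exact Function.update_of_ne (ne_of_mem_of_not_mem hv (mem_filter.1 hS).2) _ _
    · refine sum_congr rfl fun S hS => ?_
      rw [← mul_prod_erase _ _ (mem_filter.1 hS).2, Function.update_self]
      exact congrArg _ (prod_congr rfl fun v hv => Function.update_of_ne (ne_of_mem_erase hv) _ _)
  rw [key, key, zero_mul, add_zero]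

lemma cliqueWeightPartial_update_of_not_adj (k : ℕ) {w z : V} (h : ¬ G.Adj w z) (c : ℝ)
    (x : V → ℝ) :
    G.cliqueWeightPartial k w (Function.update x z c) = G.cliqueWeightPartial k w x := by
  refine sum_congr rfl fun S hS => prod_congr rfl fun v hv => Function.update_of_ne ?_ _ _
  rintro rfl
  obtain ⟨hS, hwS⟩ := mem_filter.1 hS
  exact h ((mem_cliqueFinset_iff.1 hS).isClique hwS (mem_of_mem_erase hv) (ne_of_mem_erase hv).symm)

lemma cliqueWeight_update_update (k : ℕ) {u v : V} (huv : u ≠ v) (h : ¬ G.Adj u v) (a b : ℝ)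
    (x : V → ℝ) :
    G.cliqueWeight k (Function.update (Function.update x u a) v b) =
      G.cliqueWeight k (Function.update (Function.update x u 0) v 0) +
        a * G.cliqueWeightPartial k u x + b * G.cliqueWeightPartial k v x := by
  rw [G.cliqueWeight_update k v b, G.cliqueWeightPartial_update_of_not_adj k (fun h' => h h'.symm),
    Function.update_comm huv, G.cliqueWeight_update k u a,
    G.cliqueWeightPartial_update_of_not_adj k h, ← Function.update_comm huv]

variable {G}

lemma cliqueWeight_eq_esymm_of_isClique {x : V → ℝ}
    (hx : G.IsClique (univ.filter (x · ≠ 0) : Set V)) (k : ℕ) :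
    G.cliqueWeight k x = ((univ.filter (x · ≠ 0)).val.map x).esymm k := by
  rw [esymm_map_val, cliqueWeight]
  refine (sum_subset (fun S hS => ?_) fun S hS hS' => ?_).symm
  · obtain ⟨hsub, hcard⟩ := mem_powersetCard.1 hS
    exact mem_cliqueFinset_iff.2 ⟨hx.subset (coe_subset.2 hsub), hcard⟩
  · obtain ⟨w, hwS, hw⟩ : ∃ w ∈ S, w ∉ univ.filter (x · ≠ 0) := by
      by_contra! h
      exact hS' (mem_powersetCard.2 ⟨h, (mem_cliqueFinset_iff.1 hS).card_eq⟩)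
    exact prod_eq_zero hwS (by simpa using hw)

lemma cliqueWeight_rpow_one_div_le_of_isClique {r : ℕ} (hG : G.CliqueFree (r + 1))
    {x : V → ℝ} (hx : 0 ≤ x) (hcl : G.IsClique (univ.filter (x · ≠ 0) : Set V)) {i j : ℕ}
    (hi : 1 ≤ i) (hij : i ≤ j) (hj : j ≤ r) :
    (G.cliqueWeight j x / r.choose j) ^ ((1 : ℝ) / j) ≤
      (G.cliqueWeight i x / r.choose i) ^ ((1 : ℝ) / i) := by
  set A := univ.filter (x · ≠ 0)
  have hA : #A ≤ r := hcl.card_le_of_cliqueFree hG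
  set M := A.val.map x + Multiset.replicate (r - #A) 0
  have hM : Multiset.card M = r := by simp [M]; omega
  have hM_nonneg : ∀ a ∈ M, 0 ≤ a := by
    simp only [M, Multiset.mem_add, Multiset.mem_map, Multiset.mem_replicate]
    rintro a (⟨w, -, rfl⟩ | ⟨-, rfl⟩)
    exacts [hx w, le_rfl]
  have hmean : ∀ k, M.esymmMean k = G.cliqueWeight k x / r.choose k := fun k => by
    rw [Multiset.esymmMean, hM, Multiset.esymm_add_replicate_zero,
      cliqueWeight_eq_esymm_of_isClique hcl]
  simpa only [hmean] using Multiset.esymmMean_rpow_one_div_le hM_nonneg hi hij (hM ▸ hj)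

lemma exists_cliqueWeight_eq_le_of_not_adj {x : V → ℝ} (hx : 0 ≤ x) {u v : V}
    (hu : x u ≠ 0) (hv : x v ≠ 0) (huv : u ≠ v) (hadj : ¬ G.Adj u v) (i j : ℕ) :
    ∃ y : V → ℝ, 0 ≤ y ∧ univ.filter (y · ≠ 0) ⊂ univ.filter (x · ≠ 0) ∧
      G.cliqueWeight j y = G.cliqueWeight j x ∧ G.cliqueWeight i y ≤ G.cliqueWeight i x := by
  obtain ⟨a, b, ha, hb, hab, hj, hi⟩ := exists_mul_add_mul_eq_and_le (hx u) (hx v)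
    (G.cliqueWeightPartial_nonneg j u hx) (G.cliqueWeightPartial_nonneg j v hx)
    (G.cliqueWeightPartial_nonneg i u hx) (G.cliqueWeightPartial_nonneg i v hx)
  have hP : ∀ k, G.cliqueWeight k x =
      G.cliqueWeight k (Function.update (Function.update x u 0) v 0) +
        x u * G.cliqueWeightPartial k u x + x v * G.cliqueWeightPartial k v x := fun k => by
    simpa using G.cliqueWeight_update_update k huv hadj (x u) (x v) x
  refine ⟨Function.update (Function.update x u a) v b, ?_, ?_, ?_, ?_⟩
  · intro w
    simp only [Function.update_apply]
    split_ifs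
    exacts [hb, ha, hx w]
  · refine (ssubset_iff_of_subset fun w hw => ?_).2 ?_
    · simp only [mem_filter, mem_univ, true_and] at hw ⊢
      by_cases hwu : w = u
      · exact hwu ▸ hu
      by_cases hwv : w = v
      · exact hwv ▸ hv
      simpa [hwu, hwv] using hw
    · rcases hab with rfl | rfl
      · exact ⟨u, by simpa using hu, by simp [huv]⟩
      · exact ⟨v, by simpa using hv, by simp⟩
  · rw [G.cliqueWeight_update_update j huv hadj, hP j]; linarith
  · rw [G.cliqueWeight_update_update i huv hadj, hP i]; linarith

theorem cliqueWeight_rpow_one_div_le {r : ℕ} (hG : G.CliqueFree (r + 1)) {i j : ℕ}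
    (hi : 1 ≤ i) (hij : i ≤ j) (hj : j ≤ r) {x : V → ℝ} (hx : 0 ≤ x) :
    (G.cliqueWeight j x / r.choose j) ^ ((1 : ℝ) / j) ≤
      (G.cliqueWeight i x / r.choose i) ^ ((1 : ℝ) / i) := by
  induction hN : #(univ.filter (x · ≠ 0)) using Nat.strong_induction_on generalizing x with
  | _ N ih =>
  by_cases hcl : G.IsClique (univ.filter (x · ≠ 0) : Set V)
  · exact cliqueWeight_rpow_one_div_le_of_isClique hG hx hcl hi hij hj
  obtain ⟨u, hu, v, hv, huv, hadj⟩ : ∃ u, x u ≠ 0 ∧ ∃ v, x v ≠ 0 ∧ u ≠ v ∧ ¬ G.Adj u v := by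
    simpa [IsClique, Set.Pairwise] using hcl
  obtain ⟨y, hy, hsupp, hPj, hPi⟩ := exists_cliqueWeight_eq_le_of_not_adj hx hu hv huv hadj i j
  calc (G.cliqueWeight j x / r.choose j) ^ ((1 : ℝ) / j)
      = (G.cliqueWeight j y / r.choose j) ^ ((1 : ℝ) / j) := by rw [hPj]
    _ ≤ (G.cliqueWeight i y / r.choose i) ^ ((1 : ℝ) / i) :=
        ih _ (hN ▸ card_lt_card hsupp) hy rfl
    _ ≤ (G.cliqueWeight i x / r.choose i) ^ ((1 : ℝ) / i) := by
        have := G.cliqueWeight_nonneg i hy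
        gcongr

end SimpleGraph

theorem stmt_5_general (r n i j : ℕ) (hi : 1 ≤ i) (hij : i ≤ j) (hj : j ≤ r)
    (G : SimpleGraph (Fin n)) (hG : G.CliqueFree (r + 1)) :
    ((cliqueCount G j : ℝ) / (r.choose j : ℝ)) ^ ((1 : ℝ) / j) ≤
      ((cliqueCount G i : ℝ) / (r.choose i : ℝ)) ^ ((1 : ℝ) / i) := by
  have hcount : ∀ k, (cliqueCount G k : ℝ) = G.cliqueWeight k 1 := fun k => by
    rw [cliqueCount, ← cliqueSet, ← coe_cliqueFinset, Set.ncard_coe_finset]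
    simp [SimpleGraph.cliqueWeight]
  simpa only [hcount] using G.cliqueWeight_rpow_one_div_le hG hi hij hj zero_le_one

/-- Khadzhiivanov / Sós–Straus inequality between clique counts of a `K_{r+1}`-free graph. -/
theorem stmt_5 (r n i j : ℕ) (hr : 2 ≤ r) (hi : 1 ≤ i) (hij : i ≤ j) (hj : j ≤ r)
    (G : SimpleGraph (Fin n)) (hG : G.CliqueFree (r + 1)) :
    ((cliqueCount G j : ℝ) / (r.choose j : ℝ)) ^ ((1 : ℝ) / j) ≤
      ((cliqueCount G i : ℝ) / (r.choose i : ℝ)) ^ ((1 : ℝ) / i) :=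
  stmt_5_general r n i j hi hij hj G hG
end

section
/- Let G be a graph with m edges and clique number ω (the number of vertices of a largest complete subgraph of G). Then the spectral radius satisfies λ(G) ≤ sqrt(2m·(1 − 1/ω)). -/
open SimpleGraph Matrix
open scoped Classical

noncomputable def QQ {n : ℕ} (G : SimpleGraph (Fin n)) (y z : Fin n → ℝ) : ℝ :=
  ∑ i, ∑ j, (if G.Adj i j then (1:ℝ) else 0) * (y i * z j)

lemma QQ_left {n : ℕ} (G : SimpleGraph (Fin n)) (y z : Fin n → ℝ) :
    QQ G y z = ∑ i, y i * ∑ j, (if G.Adj i j then (1:ℝ) else 0) * z j := by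
  rw [QQ]
  apply Finset.sum_congr rfl; intro i _
  rw [Finset.mul_sum]
  apply Finset.sum_congr rfl; intro j _; ring

-- clique base case
lemma MS_clique {n : ℕ} (G : SimpleGraph (Fin n)) (ω : ℕ)
    (hω : ∀ S : Finset (Fin n), G.IsClique (S : Set (Fin n)) → S.card ≤ ω)
    (y : Fin n → ℝ) (hy : ∀ i, 0 ≤ y i)
    (hcl : G.IsClique ((Finset.univ.filter (fun i => y i ≠ 0) : Finset (Fin n)) : Set (Fin n))) :
    QQ G y y ≤ (1 - 1/(ω:ℝ)) * (∑ i, y i)^2 := by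
  set S := Finset.univ.filter (fun i => y i ≠ 0) with hS
  have hyS : ∀ i ∉ S, y i = 0 := by
    intro i hi; by_contra h; exact hi (by simp [hS, h])
  have hsum : ∑ i, y i = ∑ i ∈ S, y i :=
    (Finset.sum_subset (Finset.subset_univ S) (fun i _ hi => hyS i hi)).symm
  have hQ : QQ G y y = (∑ i ∈ S, y i)^2 - ∑ i ∈ S, (y i)^2 := by
    rw [QQ]
    rw [← Finset.sum_subset (Finset.subset_univ S) (f := fun i => ∑ j, (if G.Adj i j then (1:ℝ) else 0) * (y i * y j))
      (by intro i _ hi; simp [hyS i hi])]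
    have h1 : ∀ i ∈ S, (∑ j, (if G.Adj i j then (1:ℝ) else 0) * (y i * y j))
        = ∑ j ∈ S, (if G.Adj i j then (1:ℝ) else 0) * (y i * y j) := by
      intro i _
      rw [← Finset.sum_subset (Finset.subset_univ S) (by intro j _ hj; simp [hyS j hj])]
    rw [Finset.sum_congr rfl h1]
    have h2 : ∀ i ∈ S, ∀ j ∈ S, (if G.Adj i j then (1:ℝ) else 0) * (y i * y j)
        = y i * y j - (if i = j then y i * y j else 0) := by
      intro i hi j hj
      by_cases hij : i = j
      · simp [hij, SimpleGraph.irrefl]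
      · have : G.Adj i j := hcl (by simpa [hS] using hi) (by simpa [hS] using hj) hij
        simp [this, hij]
    rw [Finset.sum_congr rfl (fun i hi => Finset.sum_congr rfl (h2 i hi))]
    simp only [Finset.sum_sub_distrib, Finset.sum_ite_eq, sq, Finset.sum_mul_sum]
    simp
  rcases Finset.eq_empty_or_nonempty S with hE | hNE
  · have : ∀ i, y i = 0 := fun i => hyS i (by simp [hE])
    simp [QQ, this]
  · have hcard1 : 1 ≤ S.card := Finset.card_pos.mpr hNE
    have hcard2 : S.card ≤ ω := hω S hcl
    have hωpos : (0:ℝ) < (ω:ℝ) := by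
      exact_mod_cast lt_of_lt_of_le hcard1 hcard2
    have hSpos : (0:ℝ) < (S.card:ℝ) := by exact_mod_cast hcard1
    have hcs : (∑ i ∈ S, y i)^2 ≤ (S.card:ℝ) * ∑ i ∈ S, (y i)^2 := by
      have := Finset.sum_mul_sq_le_sq_mul_sq S (fun _ => (1:ℝ)) y
      simpa [mul_comm] using this
    have hsq : (0:ℝ) ≤ ∑ i ∈ S, (y i)^2 := Finset.sum_nonneg (fun i _ => sq_nonneg _)
    have h1 : (∑ i ∈ S, y i)^2 ≤ (ω:ℝ) * ∑ i ∈ S, (y i)^2 := by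
      refine hcs.trans (mul_le_mul_of_nonneg_right ?_ hsq)
      exact_mod_cast hcard2
    have key : 1/(ω:ℝ) * (∑ i ∈ S, y i)^2 ≤ ∑ i ∈ S, (y i)^2 := by
      rw [one_div, inv_mul_le_iff₀ hωpos]
      exact h1
    rw [hQ, hsum, sub_mul, one_mul]
    linarith

-- Motzkin–Straus, upper bound direction
lemma MS {n : ℕ} (G : SimpleGraph (Fin n)) (ω : ℕ)
    (hω : ∀ S : Finset (Fin n), G.IsClique (S : Set (Fin n)) → S.card ≤ ω) :
    ∀ (k : ℕ) (y : Fin n → ℝ), (∀ i, 0 ≤ y i) →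
      (Finset.univ.filter (fun i => y i ≠ 0)).card ≤ k →
      QQ G y y ≤ (1 - 1/(ω:ℝ)) * (∑ i, y i)^2 := by
  intro k
  induction k with
  | zero =>
    intro y hy hcard
    have hE : Finset.univ.filter (fun i => y i ≠ 0) = ∅ := Finset.card_eq_zero.mp (Nat.le_zero.mp hcard)
    have : ∀ i, y i = 0 := by
      intro i; by_contra h
      have : i ∈ Finset.univ.filter (fun i => y i ≠ 0) := by simp [h]
      simp [hE] at this
    simp [QQ, this]
  | succ k ih =>
    intro y hy hcard
    set S := Finset.univ.filter (fun i => y i ≠ 0) with hS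
    by_cases hcl : G.IsClique (S : Set (Fin n))
    · exact MS_clique G ω hω y hy hcl
    · -- find non-adjacent pair in support
      rw [SimpleGraph.isClique_iff, Set.Pairwise] at hcl
      push_neg at hcl
      obtain ⟨u, hu, v, hv, hne, hna⟩ := hcl
      have hu' : u ∈ S := hu
      have hv' : v ∈ S := hv
      -- r i = weighted degree
      set r : Fin n → ℝ := fun i => ∑ j, (if G.Adj i j then (1:ℝ) else 0) * y j with hr
      have key : ∀ a b : Fin n, a ∈ S → b ∈ S → a ≠ b → ¬ G.Adj a b → r b ≤ r a →
          QQ G y y ≤ (1 - 1/(ω:ℝ)) * (∑ i, y i)^2 := by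
        intro a b ha hb hab hnab hrab
        set z : Fin n → ℝ := fun i => if i = b then 0 else if i = a then y a + y b else y i with hz
        have hza : z a = y a + y b := by simp [hz, hab]
        have hzb : z b = 0 := by simp [hz]
        have hzi : ∀ i, i ≠ a → i ≠ b → z i = y i := by intro i h1 h2; simp [hz, h1, h2]
        have hznn : ∀ i, 0 ≤ z i := by
          intro i
          by_cases h1 : i = b; · simp [h1, hzb]
          by_cases h2 : i = a; · rw [h2, hza]; exact add_nonneg (hy a) (hy b)
          · rw [hzi i h2 h1]; exact hy i
        have hsupp : Finset.univ.filter (fun i => z i ≠ 0) ⊆ S.erase b := by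
          intro i hi
          simp only [Finset.mem_filter, Finset.mem_univ, true_and] at hi
          rw [Finset.mem_erase]
          constructor
          · intro h; rw [h] at hi; exact hi hzb
          · by_cases h2 : i = a
            · rw [h2]; exact ha
            · by_cases h1 : i = b
              · exact absurd (h1 ▸ hzb) hi
              · rw [hzi i h2 h1] at hi; simp [hS, hi]
        have hcard' : (Finset.univ.filter (fun i => z i ≠ 0)).card ≤ k := by
          calc (Finset.univ.filter (fun i => z i ≠ 0)).card ≤ (S.erase b).card :=
                Finset.card_le_card hsupp
            _ = S.card - 1 := Finset.card_erase_of_mem hb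
            _ ≤ k := by omega
        have hsumz : ∑ i, z i = ∑ i, y i := by
          have : ∀ i, z i = y i + (if i = a then y b else 0) - (if i = b then y b else 0) := by
            intro i
            by_cases h1 : i = b
            · subst h1; simp [hzb, hab.symm, Ne.symm hab]
            · by_cases h2 : i = a
              · subst h2; simp [hza, h1]
              · simp [hzi i h2 h1, h1, h2]
          rw [Finset.sum_congr rfl (fun i _ => this i)]
          simp [Finset.sum_add_distrib, Finset.sum_sub_distrib, Finset.sum_ite_eq']
        -- Q z = Q y + 2 y_b (r a - r b)
        have hrz : ∀ i, (∑ j, (if G.Adj i j then (1:ℝ) else 0) * z j)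
            = r i + (if G.Adj i a then (1:ℝ) else 0) * y b - (if G.Adj i b then (1:ℝ) else 0) * y b := by
          intro i
          have : ∀ j, (if G.Adj i j then (1:ℝ) else 0) * z j
              = (if G.Adj i j then (1:ℝ) else 0) * y j
                + (if j = a then (if G.Adj i a then (1:ℝ) else 0) * y b else 0)
                - (if j = b then (if G.Adj i b then (1:ℝ) else 0) * y b else 0) := by
            intro j
            by_cases h1 : j = b
            · subst h1; simp [hzb, Ne.symm hab]
            · by_cases h2 : j = a
              · subst h2
                by_cases hadj : G.Adj i j <;> simp [hza, h1, hadj, mul_add]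
              · simp [hzi j h2 h1, h1, h2]
          rw [Finset.sum_congr rfl (fun j _ => this j)]
          simp [Finset.sum_add_distrib, Finset.sum_sub_distrib, Finset.sum_ite_eq', hr]
        have hzdec : ∀ i, z i = y i + (if i = a then y b else 0) - (if i = b then y b else 0) := by
          intro i
          by_cases h1 : i = b
          · subst h1; simp [hzb, Ne.symm hab]
          · by_cases h2 : i = a
            · subst h2; simp [hza, h1]
            · simp [hzi i h2 h1, h1, h2]
        have hsymm : ∀ c : Fin n, ∑ i, y i * (if G.Adj i c then (1:ℝ) else 0) = r c := by
          intro c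
          rw [hr]
          apply Finset.sum_congr rfl
          intro i _
          rw [SimpleGraph.adj_comm]; ring
        have hQz : QQ G z z = QQ G y y + 2 * y b * (r a - r b) := by
          rw [QQ_left G z z, QQ_left G y y]
          simp only [hrz]
          have expand : ∀ i, z i * (r i + (if G.Adj i a then (1:ℝ) else 0) * y b - (if G.Adj i b then (1:ℝ) else 0) * y b)
              = y i * r i
                + y b * (y i * (if G.Adj i a then (1:ℝ) else 0)) - y b * (y i * (if G.Adj i b then (1:ℝ) else 0))
                + (if i = a then y b * (r i + (if G.Adj i a then (1:ℝ) else 0) * y b - (if G.Adj i b then (1:ℝ) else 0) * y b) else 0)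
                - (if i = b then y b * (r i + (if G.Adj i a then (1:ℝ) else 0) * y b - (if G.Adj i b then (1:ℝ) else 0) * y b) else 0) := by
            intro i
            rw [hzdec i]
            by_cases h1 : i = a
            · by_cases h2 : i = b
              · exact absurd (h1.symm.trans h2) hab
              · simp only [h1, if_pos rfl, if_neg hab, if_neg (Ne.symm hab), if_true, ite_true]; ring
            · by_cases h2 : i = b
              · simp only [h2, if_pos rfl, if_neg hab, if_neg (Ne.symm hab), if_neg h1, if_true, ite_true]; ring
              · simp only [if_neg h1, if_neg h2]; ring
          rw [Finset.sum_congr rfl (fun i _ => expand i)]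
          simp only [Finset.sum_add_distrib, Finset.sum_sub_distrib, ← Finset.mul_sum,
            Finset.sum_ite_eq', Finset.mem_univ, if_true]
          rw [hsymm a, hsymm b]
          have haa : ¬ G.Adj a a := SimpleGraph.irrefl G
          have hba : ¬ G.Adj b a := fun h => hnab h.symm
          have hbb : ¬ G.Adj b b := SimpleGraph.irrefl G
          simp only [hnab, haa, hba, hbb, if_false, if_neg]
          ring
        have h2 : QQ G y y ≤ QQ G z z := by
          rw [hQz]
          nlinarith [hy b, hrab]
        have h3 := ih z hznn hcard'
        rw [hsumz] at h3
        exact h2.trans h3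
      rcases le_total (r v) (r u) with h | h
      · exact key u v hu' hv' hne hna h
      · exact key v u hv' hu' (Ne.symm hne) (fun hadj => hna hadj.symm) h

/-- Nikiforov's bound for the spectral radius via the number of edges and the clique number. -/
theorem stmt_6 (n : ℕ) (G : SimpleGraph (Fin n)) :
    specRad G ≤ Real.sqrt (2 * (G.edgeSet.ncard : ℝ) * (1 - 1 / (_root_.cliqueNum G : ℝ))) := by
  set ω := _root_.cliqueNum G with hωdef
  set m : ℝ := (G.edgeSet.ncard : ℝ) with hm
  have hmnn : (0:ℝ) ≤ m := Nat.cast_nonneg _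
  have hω : ∀ S : Finset (Fin n), G.IsClique (S : Set (Fin n)) → S.card ≤ ω := by
    intro S hcl
    apply le_csSup
    · refine ⟨n, ?_⟩
      rintro k ⟨T, hT⟩
      calc k = T.card := hT.card_eq.symm
        _ ≤ n := by simpa using Finset.card_le_univ T
    · exact ⟨S, hcl, rfl⟩
  have h1ω : (0:ℝ) ≤ 1 - 1/(ω:ℝ) := by
    rcases Nat.eq_zero_or_pos ω with h | h
    · simp [h]
    · have h1 : (1:ℝ) ≤ (ω:ℝ) := by exact_mod_cast h
      have : 1/(ω:ℝ) ≤ 1 := by rw [div_le_one (by linarith)]; linarith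
      linarith
  have hC : (0:ℝ) ≤ 2 * m * (1 - 1/(ω:ℝ)) := by
    apply mul_nonneg (by linarith) h1ω
  apply Real.sSup_le _ (Real.sqrt_nonneg _)
  rintro μ ⟨x, hx0, hxe⟩
  rcases le_or_gt μ 0 with hμ | hμ
  · exact hμ.trans (Real.sqrt_nonneg _)
  rw [Real.le_sqrt hμ.le hC]
  set A : Fin n → Fin n → ℝ := fun i j => if G.Adj i j then (1:ℝ) else 0 with hA
  have heig : ∀ i, ∑ j, A i j * x j = μ * x i := by
    intro i
    have := congrFun hxe i
    simpa [adjMat, Matrix.mulVec, dotProduct, hA] using this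
  set s : ℝ := ∑ i, (x i)^2 with hs
  have hspos : 0 < s := by
    have hex : ∃ i, x i ≠ 0 := by
      by_contra h; push_neg at h; exact hx0 (funext h)
    obtain ⟨i, hi⟩ := hex
    have h2 : 0 < (x i)^2 := by positivity
    exact lt_of_lt_of_le h2 (Finset.single_le_sum (fun j _ => sq_nonneg (x j)) (Finset.mem_univ i))
  have hmu_s : μ * s = ∑ i, ∑ j, A i j * (x i * x j) := by
    rw [hs, Finset.mul_sum]
    apply Finset.sum_congr rfl; intro i _
    rw [show μ * x i ^2 = x i * (μ * x i) by ring, ← heig i, Finset.mul_sum]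
    apply Finset.sum_congr rfl; intro j _; ring
  set c : Fin n → ℝ := fun i => (x i)^2 with hc
  set T : ℝ := ∑ i, ∑ j, A i j * (|x i| * |x j|) with hT
  have hμsT : μ * s ≤ T := by
    rw [hmu_s, hT]
    apply Finset.sum_le_sum; intro i _
    apply Finset.sum_le_sum; intro j _
    by_cases h : G.Adj i j
    · simp only [hA, h, if_true, ite_true, one_mul]
      calc x i * x j ≤ |x i * x j| := le_abs_self _
        _ = |x i| * |x j| := abs_mul _ _
    · simp [hA, h]
  -- Cauchy–Schwarz over pairs
  have key := Finset.sum_mul_sq_le_sq_mul_sq (Finset.univ ×ˢ Finset.univ)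
    (fun p : Fin n × Fin n => if G.Adj p.1 p.2 then (1:ℝ) else 0)
    (fun p : Fin n × Fin n => if G.Adj p.1 p.2 then |x p.1| * |x p.2| else 0)
  have hT' : (∑ p ∈ Finset.univ ×ˢ Finset.univ,
      (if G.Adj p.1 p.2 then (1:ℝ) else 0) * (if G.Adj p.1 p.2 then |x p.1| * |x p.2| else 0)) = T := by
    rw [hT, Finset.sum_product]
    apply Finset.sum_congr rfl; intro i _
    apply Finset.sum_congr rfl; intro j _
    by_cases h : G.Adj i j <;> simp [hA, h]
  have h2m' : (∑ p ∈ Finset.univ ×ˢ Finset.univ,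
      (if G.Adj p.1 p.2 then (1:ℝ) else 0)^2) = ∑ i, ∑ j, A i j := by
    rw [Finset.sum_product]
    apply Finset.sum_congr rfl; intro i _
    apply Finset.sum_congr rfl; intro j _
    by_cases h : G.Adj i j <;> simp [hA, h]
  have hQc' : (∑ p ∈ Finset.univ ×ˢ Finset.univ,
      (if G.Adj p.1 p.2 then |x p.1| * |x p.2| else 0)^2) = QQ G c c := by
    rw [QQ, Finset.sum_product]
    apply Finset.sum_congr rfl; intro i _
    apply Finset.sum_congr rfl; intro j _
    by_cases h : G.Adj i j <;> simp [hA, hc, h, mul_pow, sq_abs] <;> ring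
  rw [hT', h2m', hQc'] at key
  -- handshake
  have hdeg : ∀ i, (G.degree i : ℝ) = ∑ j, A i j := by
    intro i
    simp [hA, SimpleGraph.degree, SimpleGraph.neighborFinset, Finset.sum_ite_eq]
  have h2m : (∑ i, ∑ j, A i j) = 2 * m := by
    have e1 : (∑ i, ∑ j, A i j) = ∑ i, (G.degree i : ℝ) :=
      Finset.sum_congr rfl (fun i _ => (hdeg i).symm)
    rw [e1, hm]
    have hcard : G.edgeSet.ncard = G.edgeFinset.card := by
      simp [Set.ncard_eq_toFinset_card', SimpleGraph.edgeFinset]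
    rw [hcard]
    rw [← Nat.cast_sum]
    rw [SimpleGraph.sum_degrees_eq_twice_card_edges]
    push_cast
    ring
  -- Motzkin-Straus
  have hcnn : ∀ i, 0 ≤ c i := fun i => sq_nonneg _
  have hsumc : ∑ i, c i = s := rfl
  have hMS : QQ G c c ≤ (1 - 1/(ω:ℝ)) * s^2 := by
    have := MS G ω hω (Finset.univ.filter (fun i => c i ≠ 0)).card c hcnn le_rfl
    rwa [hsumc] at this
  -- put it together
  have hQcnn : (0:ℝ) ≤ QQ G c c := by
    rw [← hQc']
    exact Finset.sum_nonneg (fun p _ => sq_nonneg _)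
  have hchain : (μ * s)^2 ≤ 2 * m * (1 - 1/(ω:ℝ)) * s^2 := by
    calc (μ * s)^2 ≤ T^2 := by
          apply pow_le_pow_left₀ (by positivity) hμsT
      _ ≤ (2*m) * QQ G c c := by rw [← h2m]; exact key
      _ ≤ (2*m) * ((1 - 1/(ω:ℝ)) * s^2) := by
          apply mul_le_mul_of_nonneg_left hMS (by linarith)
      _ = 2 * m * (1 - 1/(ω:ℝ)) * s^2 := by ring
  have : μ^2 * s^2 ≤ 2 * m * (1 - 1/(ω:ℝ)) * s^2 := by
    calc μ^2 * s^2 = (μ*s)^2 := by ring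
      _ ≤ _ := hchain
  exact le_of_mul_le_mul_right this (by positivity)
end

section
/- Let F be a color-critical graph with chromatic number χ(F) = r+1, where r ≥ 2, and let t be the number of vertices of F. Let ε > 0 and let G be an F-free graph on n vertices. Suppose U_1, …, U_r are pairwise disjoint subsets of the vertex set of G such that |U_i| ≥ r·t·ε·n + t for every i, and such that for all i ≠ j, every vertex v ∈ U_i has at most ε·n non-neighbors in U_j. Then each U_i is an independent set in G. -/
open SimpleGraph Matrix
open scoped Classical

set_option maxHeartbeats 1000000 in
open scoped Classical in
lemma greedy_embed {n r t : ℕ} {α : Type*} [Fintype α]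
    (G : SimpleGraph (Fin n)) (ε : ℝ) (hε : 0 < ε)
    (D : Fin r → Set (Fin n))
    (hsize : ∀ i, (r : ℝ) * t * ε * n + t ≤ ((D i).ncard : ℝ))
    (hcompl : ∀ i j, i ≠ j → ∀ v ∈ D i,
      (({u ∈ D j | u ≠ v ∧ ¬ G.Adj v u}).ncard : ℝ) ≤ ε * n)
    (c : α → Fin r) (a b : α) (hba : a ≠ b) (hcab : c a = c b)
    (v w : Fin n) (hv : v ∈ D (c a)) (hw : w ∈ D (c a)) (hvw : v ≠ w)
    (ht : Fintype.card α = t) (hrt : (t : ℝ) - 1 ≤ (r : ℝ) * t)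
    (S : Finset α) :
    a ∉ S → b ∉ S →
    ∃ f : α → Fin n, f a = v ∧ f b = w ∧
      (∀ x ∈ insert a (insert b S), f x ∈ D (c x)) ∧
      Set.InjOn f ↑(insert a (insert b S)) ∧
      (∀ x ∈ insert a (insert b S), ∀ y ∈ insert a (insert b S),
        c x ≠ c y → G.Adj (f x) (f y)) := by
  classical
  induction S using Finset.induction_on with
  | empty =>
    intro _ _
    refine ⟨fun x => if x = a then v else w, if_pos rfl, ?_, ?_, ?_, ?_⟩
    · simp only [if_neg (Ne.symm hba)]
    · intro x hx
      simp only [Finset.mem_insert, Finset.notMem_empty, or_false] at hx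
      rcases hx with rfl | rfl
      · simpa using hv
      · simp only [if_neg (Ne.symm hba)]; rw [← hcab]; exact hw
    · intro x hx y hy hxy
      simp only [Finset.coe_insert, Set.mem_insert_iff, Finset.coe_empty,
        Set.mem_empty_iff_false, or_false] at hx hy
      rcases hx with rfl | rfl <;> rcases hy with rfl | rfl <;>
        simp_all [if_neg (Ne.symm hba)]
    · intro x hx y hy hxy
      simp only [Finset.mem_insert, Finset.notMem_empty, or_false] at hx hy
      rcases hx with rfl | rfl <;> rcases hy with rfl | rfl <;> simp_all
  | @insert x S hxS ih =>
    intro haS hbS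
    have hxa : x ≠ a := fun h => haS (h ▸ Finset.mem_insert_self x S)
    have hxb : x ≠ b := fun h => hbS (h ▸ Finset.mem_insert_self x S)
    have haS' : a ∉ S := fun h => haS (Finset.mem_insert_of_mem h)
    have hbS' : b ∉ S := fun h => hbS (Finset.mem_insert_of_mem h)
    obtain ⟨f, hfa, hfb, hmem, hinj, hcross⟩ := ih haS' hbS'
    set T : Finset α := insert a (insert b S) with hT
    have hxT : x ∉ T := by
      simp only [hT, Finset.mem_insert]
      push_neg
      exact ⟨hxa, hxb, hxS⟩
    -- the forbidden set
    set bad : Finset (Fin n) :=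
      T.image f ∪ (T.filter (fun y => c y ≠ c x)).biUnion
        (fun y => ({u ∈ D (c x) | u ≠ f y ∧ ¬ G.Adj (f y) u}).toFinset) with hbad
    have hTcard : (T.card : ℝ) ≤ (t : ℝ) - 1 := by
      have h1 : T.card ≤ Fintype.card α - 1 := by
        have : T ⊆ Finset.univ.erase x := by
          intro y hy
          exact Finset.mem_erase.mpr ⟨fun h => hxT (h ▸ hy), Finset.mem_univ y⟩
        calc T.card ≤ (Finset.univ.erase x).card := Finset.card_le_card this
          _ = Fintype.card α - 1 := by rw [Finset.card_erase_of_mem (Finset.mem_univ x), Finset.card_univ]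
      have h2 : 1 ≤ t := by
        rw [← ht]; exact Fintype.card_pos_iff.mpr ⟨a⟩
      have := (Nat.cast_le (α := ℝ)).mpr h1
      rw [ht] at this
      calc (T.card : ℝ) ≤ ((t - 1 : ℕ) : ℝ) := this
        _ = (t : ℝ) - 1 := by
          rw [Nat.cast_sub h2, Nat.cast_one]
    -- card of bad is less than card of D (c x)
    have hbadcard : (bad.card : ℝ) < ((D (c x)).ncard : ℝ) := by
      have hb1 : (bad.card : ℝ) ≤ (T.image f).card +
          ((T.filter (fun y => c y ≠ c x)).biUnion
            (fun y => ({u ∈ D (c x) | u ≠ f y ∧ ¬ G.Adj (f y) u}).toFinset)).card := by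
        rw [hbad]
        exact_mod_cast Finset.card_union_le _ _
      have hb2 : ((T.image f).card : ℝ) ≤ (t : ℝ) - 1 :=
        le_trans (Nat.cast_le.mpr (Finset.card_image_le)) hTcard
      have hb3 : (((T.filter (fun y => c y ≠ c x)).biUnion
            (fun y => ({u ∈ D (c x) | u ≠ f y ∧ ¬ G.Adj (f y) u}).toFinset)).card : ℝ)
          ≤ ((t : ℝ) - 1) * (ε * n) := by
        have hsub : ((T.filter (fun y => c y ≠ c x)).biUnion
            (fun y => ({u ∈ D (c x) | u ≠ f y ∧ ¬ G.Adj (f y) u}).toFinset)).card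
            ≤ ∑ y ∈ T.filter (fun y => c y ≠ c x),
              ({u ∈ D (c x) | u ≠ f y ∧ ¬ G.Adj (f y) u}).toFinset.card :=
          Finset.card_biUnion_le
        have hcast : (((T.filter (fun y => c y ≠ c x)).biUnion
            (fun y => ({u ∈ D (c x) | u ≠ f y ∧ ¬ G.Adj (f y) u}).toFinset)).card : ℝ)
            ≤ ∑ y ∈ T.filter (fun y => c y ≠ c x),
              (({u ∈ D (c x) | u ≠ f y ∧ ¬ G.Adj (f y) u}).toFinset.card : ℝ) := by
          exact_mod_cast hsub
        refine le_trans hcast ?_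
        have heach : ∀ y ∈ T.filter (fun y => c y ≠ c x),
            (({u ∈ D (c x) | u ≠ f y ∧ ¬ G.Adj (f y) u}).toFinset.card : ℝ) ≤ ε * n := by
          intro y hy
          rw [Finset.mem_filter] at hy
          have hfy : f y ∈ D (c y) := hmem y hy.1
          have := hcompl (c y) (c x) hy.2 (f y) hfy
          rwa [Set.ncard_eq_toFinset_card'] at this
        calc ∑ y ∈ T.filter (fun y => c y ≠ c x),
              (({u ∈ D (c x) | u ≠ f y ∧ ¬ G.Adj (f y) u}).toFinset.card : ℝ)
            ≤ (T.filter (fun y => c y ≠ c x)).card * (ε * n) := by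
              refine le_trans (Finset.sum_le_card_nsmul _ _ (ε * n) heach) ?_
              rw [nsmul_eq_mul]
          _ ≤ ((t : ℝ) - 1) * (ε * n) := by
              refine mul_le_mul_of_nonneg_right ?_ (by positivity)
              refine le_trans ?_ hTcard
              exact_mod_cast Finset.card_le_card (Finset.filter_subset _ _)
      have hεn : 0 ≤ ε * n := by positivity
      have hlt : ((t : ℝ) - 1) + ((t : ℝ) - 1) * (ε * n) < (r : ℝ) * t * ε * n + t := by
        have h1 : (t : ℝ) - 1 < t := by linarith
        have h2 : ((t : ℝ) - 1) * (ε * n) ≤ (r : ℝ) * t * (ε * n) := by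
          have := mul_le_mul_of_nonneg_right hrt hεn
          linarith
        nlinarith
      have := hsize (c x)
      linarith
    -- pick z
    have hDfin : (D (c x)).toFinset.card = (D (c x)).ncard := (Set.ncard_eq_toFinset_card' _).symm
    have hz : ∃ z ∈ (D (c x)).toFinset, z ∉ bad := by
      by_contra h
      push_neg at h
      have : (D (c x)).toFinset ⊆ bad := h
      have := Finset.card_le_card this
      rw [hDfin] at this
      exact absurd hbadcard (not_lt.mpr (by exact_mod_cast this))
    obtain ⟨z, hzD, hzbad⟩ := hz
    rw [Set.mem_toFinset] at hzD
    have hznotim : ∀ y ∈ T, z ≠ f y := by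
      intro y hy h
      exact hzbad (Finset.mem_union_left _ (Finset.mem_image.mpr ⟨y, hy, h.symm⟩))
    have hzadj : ∀ y ∈ T, c y ≠ c x → G.Adj (f y) z := by
      intro y hy hcy
      by_contra hna
      refine hzbad (Finset.mem_union_right _ ?_)
      refine Finset.mem_biUnion.mpr ⟨y, Finset.mem_filter.mpr ⟨hy, hcy⟩, ?_⟩
      rw [Set.mem_toFinset]
      exact ⟨hzD, hznotim y hy, hna⟩
    refine ⟨Function.update f x z, ?_, ?_, ?_, ?_, ?_⟩
    · rw [Function.update_of_ne (Ne.symm hxa), hfa]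
    · rw [Function.update_of_ne (Ne.symm hxb), hfb]
    · intro y hy
      have : y = x ∨ y ∈ T := by
        simp only [hT, Finset.mem_insert] at hy ⊢
        tauto
      rcases this with rfl | hyT
      · rw [Function.update_self]; exact hzD
      · rw [Function.update_of_ne (by rintro rfl; exact hxT hyT)]
        exact hmem y hyT
    · intro y₁ hy₁ y₂ hy₂ heq
      have hmem' : ∀ y, y ∈ (↑(insert a (insert b (insert x S))) : Set α) → y = x ∨ y ∈ T := by
        intro y hy
        simp only [Finset.coe_insert, Set.mem_insert_iff, Finset.mem_coe, hT,
          Finset.mem_insert] at hy ⊢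
        tauto
      rcases hmem' y₁ hy₁ with rfl | h1 <;> rcases hmem' y₂ hy₂ with rfl | h2
      · rfl
      · exfalso
        rw [Function.update_self, Function.update_of_ne (by rintro rfl; exact hxT h2)] at heq
        exact hznotim y₂ h2 heq
      · exfalso
        rw [Function.update_self, Function.update_of_ne (by rintro rfl; exact hxT h1)] at heq
        exact hznotim y₁ h1 heq.symm
      · rw [Function.update_of_ne (by rintro rfl; exact hxT h1),
          Function.update_of_ne (by rintro rfl; exact hxT h2)] at heq
        exact hinj (Finset.mem_coe.mpr h1) (Finset.mem_coe.mpr h2) heq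
    · intro y₁ hy₁ y₂ hy₂ hcne
      have hmem' : ∀ y, y ∈ insert a (insert b (insert x S)) → y = x ∨ y ∈ T := by
        intro y hy
        simp only [hT, Finset.mem_insert] at hy ⊢
        tauto
      rcases hmem' y₁ hy₁ with rfl | h1 <;> rcases hmem' y₂ hy₂ with rfl | h2
      · exact absurd rfl hcne
      · rw [Function.update_self, Function.update_of_ne (by rintro rfl; exact hxT h2)]
        exact (hzadj y₂ h2 (Ne.symm hcne)).symm
      · rw [Function.update_self, Function.update_of_ne (by rintro rfl; exact hxT h1)]
        exact hzadj y₁ h1 hcne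
      · rw [Function.update_of_ne (by rintro rfl; exact hxT h1),
          Function.update_of_ne (by rintro rfl; exact hxT h2)]
        exact hcross y₁ h1 y₂ h2 hcne

set_option maxHeartbeats 1000000 in
/-- Part (i) of the almost-complete multipartite lemma: the parts are independent sets. -/
theorem stmt_9 (r t : ℕ) (hr : 2 ≤ r) {α : Type*} [Fintype α] (F : SimpleGraph α)
    (hcrit : ColorCritical F) (hF : F.chromaticNumber = (r + 1 : ℕ∞))
    (ht : Fintype.card α = t) (ε : ℝ) (hε : 0 < ε) (n : ℕ) (G : SimpleGraph (Fin n))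
    (hfree : IsFFree F G) (U : Fin r → Set (Fin n))
    (hdisj : ∀ i j, i ≠ j → Disjoint (U i) (U j))
    (hsize : ∀ i, (r : ℝ) * t * ε * n + t ≤ ((U i).ncard : ℝ))
    (hcompl : ∀ i j, i ≠ j → ∀ v ∈ U i,
      (({u ∈ U j | u ≠ v ∧ ¬ G.Adj v u}).ncard : ℝ) ≤ ε * n) :
    ∀ i, ∀ v ∈ U i, ∀ w ∈ U i, ¬ G.Adj v w := by
  classical
  intro i v hv w hw hadj
  obtain ⟨e, he, hlt⟩ := hcrit
  revert he hlt
  refine Sym2.inductionOn e ?_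
  intro a b he hlt
  have hab : F.Adj a b := he
  have hba : a ≠ b := hab.ne
  -- get a coloring of F minus the edge
  have hcol : (F.deleteEdges {s(a, b)}).Colorable r := by
    rw [← SimpleGraph.chromaticNumber_le_iff_colorable]
    rw [hF] at hlt
    exact Order.le_of_lt_succ (by simpa [ENat.succ_def] using hlt)
  obtain ⟨c⟩ := hcol
  -- c a = c b
  have hcab : c a = c b := by
    by_contra hne
    have : F.Colorable r := by
      refine ⟨SimpleGraph.Coloring.mk c ?_⟩
      intro x y hxy
      by_cases hexy : s(x, y) = s(a, b)
      · rw [Sym2.eq_iff] at hexy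
        rcases hexy with ⟨rfl, rfl⟩ | ⟨rfl, rfl⟩
        · exact hne
        · exact fun h => hne h.symm
      · exact c.valid (by simp [SimpleGraph.deleteEdges_adj, hxy, hexy])
    have h1 := this.chromaticNumber_le
    rw [hF] at h1
    have h2 : ((r : ℕ∞) + 1 : ℕ∞) ≤ (r : ℕ∞) := le_trans (le_of_eq (by push_cast; ring)) h1
    have h3 : (r : ℕ∞) < (r : ℕ∞) + 1 :=
      (ENat.lt_add_one_iff (ENat.coe_ne_top r)).mpr le_rfl
    exact absurd h2 (not_le.mpr h3)
  -- permute the parts so that class (c a) corresponds to U i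
  set σ : Equiv.Perm (Fin r) := Equiv.swap (c a) i with hσ
  set D : Fin r → Set (Fin n) := fun k => U (σ k) with hD
  have hDca : D (c a) = U i := by
    simp [hD, hσ, Equiv.swap_apply_left]
  have hDsize : ∀ k, (r : ℝ) * t * ε * n + t ≤ ((D k).ncard : ℝ) := fun k => hsize (σ k)
  have hDcompl : ∀ k l, k ≠ l → ∀ x ∈ D k,
      (({u ∈ D l | u ≠ x ∧ ¬ G.Adj x u}).ncard : ℝ) ≤ ε * n := by
    intro k l hkl x hx
    exact hcompl (σ k) (σ l) (fun h => hkl (σ.injective h)) x hx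
  -- t ≥ 1 and the (t-1) ≤ r t bound
  have ht1 : 1 ≤ t := ht ▸ Fintype.card_pos_iff.mpr ⟨a⟩
  have hrt : (t : ℝ) - 1 ≤ (r : ℝ) * t := by
    have h1 : (1 : ℝ) ≤ r := by exact_mod_cast le_trans (by norm_num) hr
    have h2 : (1 : ℝ) ≤ t := by exact_mod_cast ht1
    nlinarith
  -- apply the greedy embedding with S = univ \ {a, b}
  have hvD : v ∈ D (c a) := hDca ▸ hv
  have hwD : w ∈ D (c a) := hDca ▸ hw
  set S : Finset α := (Finset.univ.erase a).erase b with hS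
  have haS : a ∉ S := fun h => (Finset.mem_erase.mp (Finset.mem_of_mem_erase h)).1 rfl
  have hbS : b ∉ S := fun h => (Finset.mem_erase.mp h).1 rfl
  have hSuniv : insert a (insert b S) = Finset.univ := by
    ext x
    simp only [Finset.mem_insert, hS, Finset.mem_erase, Finset.mem_univ, iff_true, and_true]
    by_cases hxa : x = a
    · left; exact hxa
    · by_cases hxb : x = b
      · right; left; exact hxb
      · right; right; exact ⟨hxb, hxa⟩
  obtain ⟨f, hfa, hfb, hmem, hinj, hcross⟩ :=
    greedy_embed G ε hε D hDsize hDcompl c a b hba hcab v w hvD hwD hadj.ne ht hrt S haS hbS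
  rw [hSuniv] at hmem hinj hcross
  -- build the homomorphism
  have hmap : ∀ x y, F.Adj x y → G.Adj (f x) (f y) := by
    intro x y hxy
    by_cases hc : c x = c y
    · have hexy : s(x, y) = s(a, b) := by
        by_contra hne
        exact (c.valid (by simp [SimpleGraph.deleteEdges_adj, hxy, hne])) hc
      rw [Sym2.eq_iff] at hexy
      rcases hexy with ⟨rfl, rfl⟩ | ⟨rfl, rfl⟩
      · rw [hfa, hfb]; exact hadj
      · rw [hfa, hfb]; exact hadj.symm
    · exact hcross x (Finset.mem_univ x) y (Finset.mem_univ y) hc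
  have hinj' : Function.Injective f := by
    intro x y hxy
    exact hinj (by simp) (by simp) hxy
  exact hfree ⟨⟨f, fun hxy => hmap _ _ hxy⟩, hinj'⟩
end

section
/- Let F be a color-critical graph with chromatic number χ(F) = r+1, where r ≥ 2, and let t be the number of vertices of F. Let ε > 0 with ε·n ≥ 1, and let G be an F-free graph on n vertices. Suppose U_1, …, U_r are pairwise disjoint subsets of the vertex set of G such that |U_i| ≥ r·t·ε·n + t for every i, and such that for all i ≠ j, every vertex v ∈ U_i has at most ε·n non-neighbors in U_j. Then for every vertex x of G not belonging to U_1 ∪ ⋯ ∪ U_r, there exists an index i such that x has at most r·t·ε·n neighbors in U_i. -/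
open SimpleGraph Matrix
open scoped Classical

/-- Part (ii) of the almost-complete multipartite lemma: every outside vertex has few
neighbors in some part. -/
theorem stmt_10 (r t : ℕ) (hr : 2 ≤ r) {α : Type*} [Fintype α] (F : SimpleGraph α)
    (hcrit : ColorCritical F) (hF : F.chromaticNumber = (r + 1 : ℕ∞))
    (ht : Fintype.card α = t) (ε : ℝ) (hε : 0 < ε) (n : ℕ) (hεn : 1 ≤ ε * n)
    (G : SimpleGraph (Fin n))
    (hfree : IsFFree F G) (U : Fin r → Set (Fin n))
    (hdisj : ∀ i j, i ≠ j → Disjoint (U i) (U j))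
    (hsize : ∀ i, (r : ℝ) * t * ε * n + t ≤ ((U i).ncard : ℝ))
    (hcompl : ∀ i j, i ≠ j → ∀ v ∈ U i,
      (({u ∈ U j | u ≠ v ∧ ¬ G.Adj v u}).ncard : ℝ) ≤ ε * n) :
    ∀ x : Fin n, (∀ i, x ∉ U i) →
      ∃ i, (({u ∈ U i | G.Adj x u}).ncard : ℝ) ≤ (r : ℝ) * t * ε * n := by
  
  intro x hx
  by_contra hcon
  push_neg at hcon
  apply hfree
  obtain ⟨e, heE, hlt⟩ := hcrit
  -- extract endpoints
  obtain ⟨a, b, hab, hcol⟩ : ∃ a b, F.Adj a b ∧ (F.deleteEdges {s(a,b)}).Colorable r := by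
    induction e using Sym2.ind with
    | _ a b =>
      refine ⟨a, b, heE, ?_⟩
      rw [hF] at hlt
      have h2 : (F.deleteEdges {s(a,b)}).chromaticNumber < (r : ℕ∞) + 1 := by
        exact_mod_cast hlt
      rw [ENat.lt_add_one_iff (by simp)] at h2
      exact chromaticNumber_le_iff_colorable.mp h2
  obtain ⟨C⟩ := hcol
  have hproper : ∀ u v : α, u ≠ a → v ≠ a → F.Adj u v → C u ≠ C v := by
    intro u v hu hv huv
    apply C.valid
    rw [deleteEdges_adj]
    refine ⟨huv, ?_⟩
    simp only [Set.mem_singleton_iff, Sym2.eq_iff]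
    tauto
  have ht2 : 2 ≤ t := by
    rw [← ht]
    have : Nontrivial α := ⟨a, b, hab.ne⟩
    exact Fintype.one_lt_card
  have htR : (2 : ℝ) ≤ t := by exact_mod_cast ht2
  have hrR : (2 : ℝ) ≤ r := by exact_mod_cast hr
  -- the counting step
  have count : ∀ (i : Fin r) (P : Finset α) (f : α → Fin n) (N : Set (Fin n)),
      ((P.card : ℝ) ≤ (t : ℝ) - 1) → N ⊆ U i → ((r : ℝ) * t * ε * n < N.ncard) →
      (∀ w ∈ P, f w ∈ U (C w)) →
      ∃ v ∈ N, ∀ w ∈ P, v ≠ f w ∧ (C w ≠ i → G.Adj (f w) v) := by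
    intro i P f N hP hNU hN hfU
    set S : α → Set (Fin n) :=
      fun w => {z ∈ U i | z ≠ f w ∧ ¬ G.Adj (f w) z ∧ C w ≠ i} with hS
    have hScard : ∀ w ∈ P, ((S w).ncard : ℝ) ≤ ε * n := by
      intro w hw
      by_cases hcw : C w = i
      · have : S w = ∅ := by
          ext z; simp [hS, hcw]
        rw [this]; simp; linarith
      · have hsub : S w ⊆ {z ∈ U i | z ≠ f w ∧ ¬ G.Adj (f w) z} := by
          intro z hz; exact ⟨hz.1, hz.2.1, hz.2.2.1⟩
        have h1 : ((S w).ncard : ℝ) ≤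
            (({z ∈ U i | z ≠ f w ∧ ¬ G.Adj (f w) z}).ncard : ℝ) := by
          exact_mod_cast Set.ncard_le_ncard hsub (Set.toFinite _)
        exact h1.trans (hcompl (C w) i hcw (f w) (hfU w hw))
    set Bad : Finset (Fin n) := P.biUnion (fun w => insert (f w) (S w).toFinset) with hBad
    have hBadCard : ((Bad.card : ℝ)) < (N.ncard : ℝ) := by
      have h1 : (Bad.card : ℝ) ≤ ∑ w ∈ P, ((1 : ℝ) + ε * n) := by
        have h2 := Finset.card_biUnion_le (s := P)
          (t := fun w => insert (f w) (S w).toFinset)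
        have h3 : ((P.biUnion (fun w => insert (f w) (S w).toFinset)).card : ℝ)
            ≤ ∑ w ∈ P, ((insert (f w) (S w).toFinset).card : ℝ) := by
          exact_mod_cast h2
        refine h3.trans (Finset.sum_le_sum ?_)
        intro w hw
        have h4 : ((insert (f w) (S w).toFinset).card : ℝ)
            ≤ ((S w).toFinset.card : ℝ) + 1 := by
          exact_mod_cast Finset.card_insert_le (f w) (S w).toFinset
        refine h4.trans ?_
        have : ((S w).toFinset.card : ℝ) ≤ ε * n := by
          rw [← Set.ncard_eq_toFinset_card']
          exact hScard w hw
        linarith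
      rw [Finset.sum_const, nsmul_eq_mul] at h1
      have h5 : (P.card : ℝ) * (1 + ε * n) ≤ ((t : ℝ) - 1) * (1 + ε * n) := by
        apply mul_le_mul_of_nonneg_right hP
        positivity
      have h6 : ((t : ℝ) - 1) * (1 + ε * n) < (r : ℝ) * t * ε * n := by
        have k1 : (t : ℝ) * 1 ≤ (t : ℝ) * (ε * n) :=
          mul_le_mul_of_nonneg_left hεn (by positivity)
        have k2 : 2 * ((t : ℝ) * (ε * n)) ≤ (r : ℝ) * ((t : ℝ) * (ε * n)) :=
          mul_le_mul_of_nonneg_right hrR (by positivity)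
        nlinarith
      linarith
    -- find v ∈ N \ Bad
    have hNB : (N.toFinset \ Bad).Nonempty := by
      rw [← Finset.card_pos]
      have := Finset.le_card_sdiff Bad N.toFinset
      have hc : Bad.card < N.toFinset.card := by
        rw [← Set.ncard_eq_toFinset_card']
        exact_mod_cast hBadCard
      omega
    obtain ⟨v, hv⟩ := hNB
    rw [Finset.mem_sdiff, Set.mem_toFinset] at hv
    refine ⟨v, hv.1, ?_⟩
    intro w hw
    have hvb : v ∉ insert (f w) (S w).toFinset := by
      intro hmem
      exact hv.2 (Finset.mem_biUnion.mpr ⟨w, hw, hmem⟩)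
    rw [Finset.mem_insert, Set.mem_toFinset] at hvb
    push_neg at hvb
    refine ⟨hvb.1, ?_⟩
    intro hcw
    by_contra hadj
    exact hvb.2 ⟨hNU hv.1, hvb.1, hadj, hcw⟩
  -- greedy construction
  have key : ∀ P : Finset α, a ∉ P → ∃ f : α → Fin n,
      (∀ u ∈ P, f u ∈ U (C u)) ∧
      (∀ u ∈ P, F.Adj a u → G.Adj x (f u)) ∧
      (∀ u ∈ P, ∀ v ∈ P, u ≠ v → f u ≠ f v) ∧
      (∀ u ∈ P, ∀ v ∈ P, F.Adj u v → G.Adj (f u) (f v)) := by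
    intro P
    induction P using Finset.induction_on with
    | empty => exact fun _ => ⟨fun _ => x, by simp, by simp, by simp, by simp⟩
    | @insert u P hu ih =>
      intro haP
      rw [Finset.mem_insert] at haP
      push_neg at haP
      obtain ⟨hau, haP⟩ := haP
      obtain ⟨f, hf1, hf2, hf3, hf4⟩ := ih haP
      set N : Set (Fin n) := if F.Adj a u then {z ∈ U (C u) | G.Adj x z} else U (C u)
        with hNdef
      have hNU : N ⊆ U (C u) := by
        rw [hNdef]; split
        · exact fun z hz => hz.1
        · exact fun z hz => hz
      have hNcard : (r : ℝ) * t * ε * n < N.ncard := by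
        rw [hNdef]; split
        · exact hcon (C u)
        · have := hsize (C u); linarith
      have hPcard : ((P.card : ℝ)) ≤ (t : ℝ) - 1 := by
        have h1 : (insert u P).card ≤ Fintype.card α := Finset.card_le_univ _
        rw [Finset.card_insert_of_notMem hu, ht] at h1
        have : (P.card : ℝ) + 1 ≤ t := by exact_mod_cast h1
        linarith
      obtain ⟨v, hvN, hvprop⟩ := count (C u) P f N hPcard hNU hNcard hf1
      refine ⟨Function.update f u v, ?_, ?_, ?_, ?_⟩
      · intro w hw
        by_cases hwu : w = u
        · subst hwu; rw [Function.update_self]; exact hNU hvN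
        · have hwP := (Finset.mem_insert.mp hw).resolve_left hwu
          rw [Function.update_of_ne hwu]
          exact hf1 w hwP
      · intro w hw hadj
        by_cases hwu : w = u
        · subst hwu
          rw [Function.update_self]
          rw [hNdef, if_pos hadj] at hvN
          exact hvN.2
        · have hwP := (Finset.mem_insert.mp hw).resolve_left hwu
          rw [Function.update_of_ne hwu]
          exact hf2 w hwP hadj
      · intro w hw w' hw' hne
        by_cases hwu : w = u <;> by_cases hw'u : w' = u
        · exact absurd (hwu.trans hw'u.symm) hne
        · subst hwu
          have hw'P := (Finset.mem_insert.mp hw').resolve_left hw'u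
          rw [Function.update_self, Function.update_of_ne hw'u]
          exact (hvprop w' hw'P).1
        · subst hw'u
          have hwP := (Finset.mem_insert.mp hw).resolve_left hwu
          rw [Function.update_of_ne hwu, Function.update_self]
          exact fun h => (hvprop w hwP).1 h.symm
        · have hwP := (Finset.mem_insert.mp hw).resolve_left hwu
          have hw'P := (Finset.mem_insert.mp hw').resolve_left hw'u
          rw [Function.update_of_ne hwu, Function.update_of_ne hw'u]
          exact hf3 w hwP w' hw'P hne
      · intro w hw w' hw' hadj
        by_cases hwu : w = u <;> by_cases hw'u : w' = u
        · subst hwu; subst hw'u; exact absurd hadj (F.irrefl)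
        · subst hwu
          have hw'P := (Finset.mem_insert.mp hw').resolve_left hw'u
          rw [Function.update_self, Function.update_of_ne hw'u]
          have hcne : C w' ≠ C w := hproper w' w
            (ne_of_mem_of_not_mem hw'P haP) (Ne.symm hau) hadj.symm
          exact ((hvprop w' hw'P).2 hcne).symm
        · subst hw'u
          have hwP := (Finset.mem_insert.mp hw).resolve_left hwu
          rw [Function.update_of_ne hwu, Function.update_self]
          have hcne : C w ≠ C w' := hproper w w'
            (ne_of_mem_of_not_mem hwP haP) (Ne.symm hau) hadj
          exact (hvprop w hwP).2 hcne
        · have hwP := (Finset.mem_insert.mp hw).resolve_left hwu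
          have hw'P := (Finset.mem_insert.mp hw').resolve_left hw'u
          rw [Function.update_of_ne hwu, Function.update_of_ne hw'u]
          exact hf4 w hwP w' hw'P hadj
  obtain ⟨f, hf1, hf2, hf3, hf4⟩ := key (Finset.univ.erase a) (by simp)
  have hmem : ∀ u : α, u ≠ a → u ∈ Finset.univ.erase a := by
    intro u hu; simp [hu]
  set g : α → Fin n := Function.update f a x with hg
  have hga : g a = x := Function.update_self a x f
  have hgu : ∀ u ≠ a, g u = f u := fun u hu => Function.update_of_ne hu x f
  have hhom : ∀ {u v : α}, F.Adj u v → G.Adj (g u) (g v) := by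
    intro u v hadj
    by_cases hua : u = a <;> by_cases hva : v = a
    · exact absurd hadj (by rw [hua, hva]; exact F.irrefl)
    · subst hua
      rw [hga, hgu v hva]
      exact hf2 v (hmem v hva) hadj
    · subst hva
      rw [hga, hgu u hua]
      exact (hf2 u (hmem u hua) hadj.symm).symm
    · rw [hgu u hua, hgu v hva]
      exact hf4 u (hmem u hua) v (hmem v hva) hadj
  refine ⟨⟨g, hhom⟩, ?_⟩
  intro u v huv0
  have huv : g u = g v := huv0
  by_contra hne
  by_cases hua : u = a <;> by_cases hva : v = a
  · exact hne (hua.trans hva.symm)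
  · subst hua
    rw [hga, hgu v hva] at huv
    exact hx (C v) (huv ▸ hf1 v (hmem v hva))
  · subst hva
    rw [hga, hgu u hua] at huv
    exact hx (C u) (huv.symm ▸ hf1 u (hmem u hua))
  · rw [hgu u hua, hgu v hva] at huv
    exact hf3 u (hmem u hua) v (hmem v hva) hne huv
end

section
/- Let r ≥ 2 and 2 ≤ s ≤ r be integers and let δ ≥ 0. If G is a K_{r+1}-free graph on n vertices with k_s(G) ≥ C(r,s)·(n/r)^s − δ·n^s, then e(G) ≥ e(T_r(n)) − C(r,2)·(δ/C(r,s))^{2/s}·n². -/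
open SimpleGraph Matrix
open scoped Classical

/-!
The core is the Khadžiev–Nikiforov inequality `C(r,2)^s k_s(G)^2 ≤ C(r,s)^2 e(G)^s` for
`K_{r+1}`-free `G`, proved for the weighted clique polynomials
`P_j(x) = ∑_{S j-clique} ∏_{i ∈ S} x i`, `x ≥ 0`, and then evaluated at `x = 1`.
If `u, v` are non-adjacent vertices in the support of `x`, both `P_2` and `P_s` are affine on
the line `x + t (∂_v P_2(x) e_u - ∂_u P_2(x) e_v)`, along which `P_2` is constant; moving to
the endpoint where `P_s` is larger kills a coordinate. Repeating, the support becomes a clique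
of size `m ≤ r`, where `P_j` is the `j`-th elementary symmetric polynomial of the weights, and
the bound follows from Maclaurin's inequality (via Newton's inequalities) and the monotonicity
of `C(m,s)^2 / C(m,2)^s` in `m`.
With `e(T_r(n)) ≤ C(r,2) (n/r)^2` and the subadditivity of `t ↦ t^(2/s)`, the edge bound
follows.
-/

open Finset

section ElementarySymmetric

variable {ι : Type*} (T : Finset ι) (x : ι → ℝ)

noncomputable def esymm (k : ℕ) : ℝ :=
  ∑ A ∈ T.powersetCard k, ∏ i ∈ A, x i

noncomputable def esymmMean (k : ℕ) : ℝ :=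
  esymm T x k / ((#T).choose k : ℝ)

@[simp]
lemma esymm_zero : esymm T x 0 = 1 := by
  simp [esymm]

@[simp]
lemma esymmMean_zero : esymmMean T x 0 = 1 := by
  rw [esymmMean, esymm_zero, Nat.choose_zero_right, Nat.cast_one, div_one]

variable {T x}

lemma esymm_of_card_lt {k : ℕ} (h : #T < k) : esymm T x k = 0 := by
  rw [esymm, powersetCard_eq_empty.2 h, sum_empty]

lemma esymmMean_of_card_lt {k : ℕ} (h : #T < k) : esymmMean T x k = 0 := by
  rw [esymmMean, esymm_of_card_lt h, zero_div]

lemma esymm_nonneg (hx : ∀ i ∈ T, 0 ≤ x i) (k : ℕ) : 0 ≤ esymm T x k :=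
  sum_nonneg fun _ hA => prod_nonneg fun i hi => hx i ((mem_powersetCard.1 hA).1 hi)

lemma esymm_eq_choose_mul_esymmMean (k : ℕ) :
    esymm T x k = (#T).choose k * esymmMean T x k := by
  rcases le_or_gt k #T with hk | hk
  · have : ((#T).choose k : ℝ) ≠ 0 := by exact_mod_cast (Nat.choose_pos hk).ne'
    rw [esymmMean, mul_div_cancel₀ _ this]
  · rw [esymm_of_card_lt hk, esymmMean_of_card_lt hk, mul_zero]

lemma esymm_insert [DecidableEq ι] {a : ι} (ha : a ∉ T) (k : ℕ) :
    esymm (insert a T) x (k + 1) = esymm T x (k + 1) + x a * esymm T x k := by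
  have hdisj : Disjoint (T.powersetCard (k + 1)) ((T.powersetCard k).image (insert a)) := by
    simp only [disjoint_right, mem_image, mem_powersetCard]
    rintro _ ⟨B, -, rfl⟩ hB
    exact ha (hB.1 (mem_insert_self a B))
  have hinj : Set.InjOn (insert a) (T.powersetCard k : Set (Finset ι)) := by
    intro A hA B hB hAB
    rw [mem_coe, mem_powersetCard] at hA hB
    rw [← erase_insert (fun h => ha (hA.1 h)), ← erase_insert (fun h => ha (hB.1 h)), hAB]
  rw [esymm, powersetCard_succ_insert ha, sum_union hdisj, sum_image hinj, esymm, esymm, mul_sum]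
  congr 1
  refine sum_congr rfl fun A hA => prod_insert fun h => ha ((mem_powersetCard.1 hA).1 h)

variable (x) in
lemma esymmMean_insert [DecidableEq ι] {a : ι} (ha : a ∉ T) (j : ℕ) :
    esymmMean (insert a T) x j =
      (((#T : ℝ) + 1 - j) * esymmMean T x j + j * x a * esymmMean T x (j - 1)) / (#T + 1) := by
  have hcard : #(insert a T) = #T + 1 := card_insert_of_notMem ha
  rcases j with _ | i
  · simp only [esymmMean_zero]
    field_simp
    ring
  rcases le_or_gt (i + 1) (#T + 1) with hi | hi
  · have hC : (0 : ℝ) < ((#T + 1).choose (i + 1) : ℕ) := by exact_mod_cast Nat.choose_pos hi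
    have hrec := esymm_insert (x := x) ha i
    rw [esymm_eq_choose_mul_esymmMean, esymm_eq_choose_mul_esymmMean,
      esymm_eq_choose_mul_esymmMean (T := T), hcard] at hrec
    have hchoose₁ :
        ((#T).choose (i + 1) : ℝ) * (#T + 1) = ((#T + 1).choose (i + 1) : ℕ) * (#T - i) := by
      have := Nat.choose_mul_succ_eq (#T) (i + 1)
      rw [show #T + 1 - (i + 1) = #T - i by omega] at this
      rw [← Nat.cast_sub (by omega : i ≤ #T)]
      exact_mod_cast this
    have hchoose₀ :
        ((#T : ℝ) + 1) * (#T).choose i = ((#T + 1).choose (i + 1) : ℕ) * (i + 1) := by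
      exact_mod_cast Nat.add_one_mul_choose_eq (#T) i
    rw [eq_div_iff (by positivity), Nat.add_sub_cancel]
    apply mul_left_cancel₀ hC.ne'
    push_cast
    linear_combination (↑(#T) + 1) * hrec + esymmMean T x (i + 1) * hchoose₁ +
      x a * esymmMean T x i * hchoose₀
  · rw [esymmMean_of_card_lt (by omega), esymmMean_of_card_lt (by omega),
      esymmMean_of_card_lt (by omega)]
    simp

end ElementarySymmetric

section LogConcave

structure IsLogConcaveSeq (m : ℕ) (q : ℕ → ℝ) : Prop where
  pos : ∀ j ≤ m, 0 < q j
  eq_zero : ∀ j, m < j → q j = 0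
  mul_le_sq : ∀ j, q j * q (j + 2) ≤ q (j + 1) ^ 2

namespace IsLogConcaveSeq

variable {m : ℕ} {q : ℕ → ℝ}

lemma nonneg (h : IsLogConcaveSeq m q) (j : ℕ) : 0 ≤ q j := by
  rcases le_or_gt j m with hj | hj
  · exact (h.pos j hj).le
  · exact (h.eq_zero j hj).ge

lemma mul_le_mul_succ (h : IsLogConcaveSeq m q) {i : ℕ} (hi : i + 2 ≤ m) :
    q i * q (i + 3) ≤ q (i + 1) * q (i + 2) := by
  have h₁ := h.pos (i + 1) (by omega)
  have h₂ := h.pos (i + 2) (by omega)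
  have hprod : (q i * q (i + 2)) * (q (i + 1) * q (i + 3)) ≤ q (i + 1) ^ 2 * q (i + 2) ^ 2 :=
    mul_le_mul (h.mul_le_sq i) (h.mul_le_sq (i + 1))
      (mul_nonneg (h.nonneg _) (h.nonneg _)) (sq_nonneg _)
  refine le_of_mul_le_mul_right ?_ (mul_pos h₁ h₂)
  nlinarith

lemma div_const (h : IsLogConcaveSeq m q) {c : ℝ} (hc : 0 < c) :
    IsLogConcaveSeq m fun j => q j / c where
  pos j hj := div_pos (h.pos j hj) hc
  eq_zero j hj := by rw [h.eq_zero j hj, zero_div]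
  mul_le_sq j := by
    rw [div_mul_div_comm, div_pow, sq c]
    exact div_le_div_of_nonneg_right (h.mul_le_sq j) (by positivity)

/-- If `q j = e j / C(m, j)`, then up to the factor `m + 1` the new sequence is
`e' j / C(m + 1, j)`, where `∑ e' j t ^ j = (1 + y t) * ∑ e j t ^ j`. -/
lemma extend (h : IsLogConcaveSeq m q) {y : ℝ} (hy : 0 < y) :
    IsLogConcaveSeq (m + 1) fun j => ((m : ℝ) + 1 - j) * q j + j * y * q (j - 1) where
  pos j hj := by
    rcases hj.lt_or_eq with hj | rfl
    · have hq := h.pos j (by omega)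
      have hj' : (j : ℝ) + 1 ≤ m + 1 := by exact_mod_cast hj
      nlinarith [mul_nonneg (mul_nonneg (Nat.cast_nonneg j) hy.le) (h.nonneg (j - 1))]
    · rw [h.eq_zero (m + 1) (by omega), Nat.add_sub_cancel]
      have := h.pos m le_rfl
      simp only [mul_zero, zero_add]
      positivity
  eq_zero j hj := by
    rw [h.eq_zero j (by omega), h.eq_zero (j - 1) (by omega)]
    ring
  mul_le_sq j := by
    simp only [show j + 2 - 1 = j + 1 by omega, Nat.add_sub_cancel]
    rcases le_or_gt m j with hj | hj
    · rw [h.eq_zero (j + 1) (by omega), h.eq_zero (j + 2) (by omega)]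
      simp only [mul_zero, add_zero]
      positivity
    have hlc₀ : (j : ℝ) * (q (j - 1) * q (j + 1)) ≤ j * q j ^ 2 := by
      rcases j with _ | i
      · simp
      · exact mul_le_mul_of_nonneg_left (h.mul_le_sq i) (Nat.cast_nonneg _)
    have hlc₁ : (j : ℝ) * (q (j - 1) * q (j + 2)) ≤ j * (q j * q (j + 1)) := by
      rcases j with _ | i
      · simp
      · exact mul_le_mul_of_nonneg_left (h.mul_le_mul_succ (by omega)) (Nat.cast_nonneg _)
    have ha : (1 : ℝ) ≤ m - j := by
      rw [le_sub_iff_add_le']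
      exact_mod_cast hj
    push_cast
    -- the difference of the two sides is the sum of these four nonnegative terms
    nlinarith [sq_nonneg (q (j + 1) - y * q j),
      mul_nonneg (by nlinarith : (0 : ℝ) ≤ (m - j) ^ 2 - 1) (sub_nonneg.2 (h.mul_le_sq j)),
      mul_nonneg (mul_nonneg (sub_nonneg.2 ha) hy.le) (sub_nonneg.2 hlc₁),
      mul_nonneg (mul_nonneg (by positivity : (0 : ℝ) ≤ j + 2) (sq_nonneg y))
        (sub_nonneg.2 hlc₀)]

end IsLogConcaveSeq

end LogConcave

section Maclaurin

variable {ι : Type*}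

theorem isLogConcaveSeq_esymmMean {T : Finset ι} {x : ι → ℝ} (hx : ∀ i ∈ T, 0 < x i) :
    IsLogConcaveSeq (#T) (esymmMean T x) := by
  induction T using Finset.induction_on with
  | empty =>
    have hvanish : ∀ j, 0 < j → esymmMean (∅ : Finset ι) x j = 0 :=
      fun j hj => esymmMean_of_card_lt (by simpa using hj)
    refine ⟨fun j hj => ?_, fun j hj => hvanish j (by simpa using hj),
      fun j => by rw [hvanish (j + 2) (by omega), mul_zero]; positivity⟩
    obtain rfl : j = 0 := by simpa using hj
    simp
  | @insert a T ha ih =>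
    have hext := (ih fun i hi => hx i (mem_insert_of_mem hi)).extend
      (hx a (mem_insert_self a T)) |>.div_const (c := (#T : ℝ) + 1) (by positivity)
    rw [card_insert_of_notMem ha]
    convert hext using 1
    funext j
    exact esymmMean_insert x ha j

namespace IsLogConcaveSeq

variable {m : ℕ} {q : ℕ → ℝ}

lemma pow_succ_le_pow (h : IsLogConcaveSeq m q) (h₀ : q 0 = 1) {k : ℕ} (hk : 1 ≤ k)
    (hkm : k + 1 ≤ m) : q (k + 1) ^ k ≤ q k ^ (k + 1) := by
  induction k, hk using Nat.le_induction with
  | base => simpa [h₀] using h.mul_le_sq 0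
  | succ k hk ih =>
    have hq := h.pos k (by omega)
    have hq₁ := h.pos (k + 1) (by omega)
    have hq₂ := h.pos (k + 2) (by omega)
    refine le_of_mul_le_mul_right ?_ (pow_pos hq (k + 1))
    calc q (k + 2) ^ (k + 1) * q k ^ (k + 1) = (q k * q (k + 2)) ^ (k + 1) := by ring
      _ ≤ (q (k + 1) ^ 2) ^ (k + 1) := by gcongr; exact h.mul_le_sq k
      _ = q (k + 1) ^ (k + 2) * q (k + 1) ^ k := by ring
      _ ≤ q (k + 1) ^ (k + 2) * q k ^ (k + 1) := by gcongr; exact ih (by omega)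

lemma sq_le_pow (h : IsLogConcaveSeq m q) (h₀ : q 0 = 1) {s : ℕ} (hs : 2 ≤ s)
    (hsm : s ≤ m) : q s ^ 2 ≤ q 2 ^ s := by
  induction s, hs using Nat.le_induction with
  | base => rfl
  | succ s hs ih =>
    have hq₂ := h.pos 2 (by omega)
    have hq := h.pos s (by omega)
    have hq₁ := h.nonneg (s + 1)
    refine (pow_le_pow_iff_left₀ (by positivity) (by positivity) (by omega : s ≠ 0)).1 ?_
    calc (q (s + 1) ^ 2) ^ s = (q (s + 1) ^ s) ^ 2 := by ring
      _ ≤ (q s ^ (s + 1)) ^ 2 := by gcongr; exact h.pow_succ_le_pow h₀ (by omega) hsm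
      _ = (q s ^ 2) ^ (s + 1) := by ring
      _ ≤ (q 2 ^ s) ^ (s + 1) := by gcongr; exact ih (by omega)
      _ = (q 2 ^ (s + 1)) ^ s := by ring

end IsLogConcaveSeq

end Maclaurin

section BinomialMonotone

lemma add_one_pow_mul_sub_sq_le {r s : ℕ} (hs : 2 ≤ s) (hsr : s ≤ r) :
    ((r : ℝ) + 1) ^ s * (r + 1 - s) ^ 2 ≤ ((r : ℝ) + 1) ^ 2 * (r - 1) ^ s := by
  induction s, hs using Nat.le_induction with
  | base => exact le_of_eq (by ring)
  | succ s hs ih =>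
    have hsr' : (s : ℝ) + 1 ≤ r := by exact_mod_cast hsr
    have hs' : (2 : ℝ) ≤ s := by exact_mod_cast hs
    have key : ((r : ℝ) + 1) * (r - s) ^ 2 ≤ (r + 1 - s) ^ 2 * (r - 1) := by
      nlinarith [mul_nonneg (sub_nonneg.2 hsr') (sub_nonneg.2 hs')]
    have hr : (0 : ℝ) ≤ r - 1 := by linarith
    push_cast
    calc ((r : ℝ) + 1) ^ (s + 1) * (r + 1 - (s + 1)) ^ 2
        = ((r : ℝ) + 1) ^ s * ((r + 1) * (r - s) ^ 2) := by ring
      _ ≤ ((r : ℝ) + 1) ^ s * ((r + 1 - s) ^ 2 * (r - 1)) := by gcongr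
      _ = ((r : ℝ) + 1) ^ s * (r + 1 - s) ^ 2 * (r - 1) := by ring
      _ ≤ ((r : ℝ) + 1) ^ 2 * (r - 1) ^ s * (r - 1) :=
          mul_le_mul_of_nonneg_right (ih (by omega)) hr
      _ = ((r : ℝ) + 1) ^ 2 * (r - 1) ^ (s + 1) := by ring

lemma choose_sq_mul_choose_two_succ_pow_le {r s : ℕ} (hs : 2 ≤ s) (hsr : s ≤ r) :
    (r.choose s : ℝ) ^ 2 * ((r + 1).choose 2) ^ s ≤
      ((r + 1).choose s : ℝ) ^ 2 * (r.choose 2) ^ s := by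
  have hchoose_s : (r.choose s : ℝ) * (r + 1) = ((r + 1).choose s) * (r + 1 - s) := by
    have hcast : ((r + 1 - s : ℕ) : ℝ) = r + 1 - s := by
      rw [Nat.cast_sub (by omega : s ≤ r + 1)]; push_cast; ring
    rw [← hcast]
    exact_mod_cast Nat.choose_mul_succ_eq r s
  have hchoose_two : (r.choose 2 : ℝ) * (r + 1) = ((r + 1).choose 2) * (r - 1) := by
    have hcast : ((r + 1 - 2 : ℕ) : ℝ) = r - 1 := by
      rw [Nat.cast_sub (by omega : 2 ≤ r + 1)]; push_cast; ring
    rw [← hcast]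
    exact_mod_cast Nat.choose_mul_succ_eq r 2
  set A := (((r + 1).choose s : ℕ) : ℝ)
  set B := (((r + 1).choose 2 : ℕ) : ℝ)
  refine le_of_mul_le_mul_right ?_ (by positivity : (0 : ℝ) < ((r : ℝ) + 1) ^ (s + 2))
  calc (r.choose s : ℝ) ^ 2 * B ^ s * ((r : ℝ) + 1) ^ (s + 2)
      = ((r.choose s : ℝ) * (r + 1)) ^ 2 * B ^ s * ((r : ℝ) + 1) ^ s := by ring
    _ = A ^ 2 * B ^ s * (((r : ℝ) + 1) ^ s * (r + 1 - s) ^ 2) := by rw [hchoose_s]; ring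
    _ ≤ A ^ 2 * B ^ s * (((r : ℝ) + 1) ^ 2 * (r - 1) ^ s) :=
        mul_le_mul_of_nonneg_left (add_one_pow_mul_sub_sq_le hs hsr) (by positivity)
    _ = A ^ 2 * ((r.choose 2 : ℝ) * (r + 1)) ^ s * ((r : ℝ) + 1) ^ 2 := by
        rw [hchoose_two, mul_pow]; ring
    _ = A ^ 2 * (r.choose 2) ^ s * ((r : ℝ) + 1) ^ (s + 2) := by rw [mul_pow]; ring

lemma choose_two_pow_mul_choose_sq_le {s m r : ℕ} (hs : 2 ≤ s) (hsm : s ≤ m) (hmr : m ≤ r) :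
    (r.choose 2 : ℝ) ^ s * (m.choose s) ^ 2 ≤ (r.choose s : ℝ) ^ 2 * (m.choose 2) ^ s := by
  induction r, hmr using Nat.le_induction with
  | base => exact le_of_eq (by ring)
  | succ r hmr ih =>
    have hpos : (0 : ℝ) < (r.choose 2 : ℝ) ^ s := by
      have := Nat.choose_pos (by omega : 2 ≤ r)
      positivity
    refine le_of_mul_le_mul_right ?_ hpos
    calc ((r + 1).choose 2 : ℝ) ^ s * (m.choose s) ^ 2 * (r.choose 2) ^ s
        = ((r.choose 2 : ℝ) ^ s * (m.choose s) ^ 2) * ((r + 1).choose 2) ^ s := by ring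
      _ ≤ ((r.choose s : ℝ) ^ 2 * (m.choose 2) ^ s) * ((r + 1).choose 2) ^ s := by gcongr
      _ = ((r.choose s : ℝ) ^ 2 * ((r + 1).choose 2) ^ s) * (m.choose 2) ^ s := by ring
      _ ≤ (((r + 1).choose s : ℝ) ^ 2 * (r.choose 2) ^ s) * (m.choose 2) ^ s :=
          mul_le_mul_of_nonneg_right
            (choose_sq_mul_choose_two_succ_pow_le hs (hsm.trans hmr)) (by positivity)
      _ = ((r + 1).choose s : ℝ) ^ 2 * (m.choose 2) ^ s * (r.choose 2) ^ s := by ring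

end BinomialMonotone

theorem choose_two_pow_mul_esymm_sq_le {ι : Type*} {T : Finset ι} {x : ι → ℝ}
    (hx : ∀ i ∈ T, 0 < x i) {r s : ℕ} (hs : 2 ≤ s) (hTr : #T ≤ r) :
    (r.choose 2 : ℝ) ^ s * esymm T x s ^ 2 ≤ (r.choose s : ℝ) ^ 2 * esymm T x 2 ^ s := by
  rcases lt_or_ge (#T) s with hTs | hsT
  · rw [esymm_of_card_lt hTs]
    have := esymm_nonneg (fun i hi => (hx i hi).le) 2
    simp only [ne_eq, OfNat.ofNat_ne_zero, not_false_eq_true, zero_pow, mul_zero]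
    positivity
  have hq := (isLogConcaveSeq_esymmMean hx).sq_le_pow (esymmMean_zero T x) hs hsT
  have hq₂ := (isLogConcaveSeq_esymmMean hx).nonneg 2
  rw [esymm_eq_choose_mul_esymmMean, esymm_eq_choose_mul_esymmMean]
  calc (r.choose 2 : ℝ) ^ s * (((#T).choose s) * esymmMean T x s) ^ 2
      = ((r.choose 2 : ℝ) ^ s * ((#T).choose s) ^ 2) * esymmMean T x s ^ 2 := by ring
    _ ≤ ((r.choose s : ℝ) ^ 2 * ((#T).choose 2) ^ s) * esymmMean T x 2 ^ s :=
        mul_le_mul (choose_two_pow_mul_choose_sq_le hs hsT hTr) hq (sq_nonneg _)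
          (by positivity)
    _ = (r.choose s : ℝ) ^ 2 * (((#T).choose 2) * esymmMean T x 2) ^ s := by ring

section CliquePolynomial

variable {V : Type*} [Fintype V] [DecidableEq V] (G : SimpleGraph V) [DecidableRel G.Adj]

noncomputable def cliquePoly (j : ℕ) (x : V → ℝ) : ℝ :=
  ∑ S ∈ G.cliqueFinset j, ∏ i ∈ S, x i

noncomputable def cliquePolyPartial (j : ℕ) (u : V) (x : V → ℝ) : ℝ :=
  ∑ S ∈ G.cliqueFinset j with u ∈ S, ∏ i ∈ S.erase u, x i

variable {G}

lemma cliquePoly_nonneg (j : ℕ) {x : V → ℝ} (hx : 0 ≤ x) : 0 ≤ cliquePoly G j x :=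
  sum_nonneg fun _ _ => prod_nonneg fun i _ => hx i

lemma cliquePolyPartial_nonneg (j : ℕ) (u : V) {x : V → ℝ} (hx : 0 ≤ x) :
    0 ≤ cliquePolyPartial G j u x :=
  sum_nonneg fun _ _ => prod_nonneg fun i _ => hx i

lemma cliquePoly_update (j : ℕ) (u : V) (x : V → ℝ) (a : ℝ) :
    cliquePoly G j (Function.update x u a) =
      cliquePoly G j x + (a - x u) * cliquePolyPartial G j u x := by
  have hsplit : ∀ y : V → ℝ, cliquePoly G j y =
      ∑ S ∈ G.cliqueFinset j with u ∉ S, ∏ i ∈ S, y i +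
        y u * ∑ S ∈ G.cliqueFinset j with u ∈ S, ∏ i ∈ S.erase u, y i := by
    intro y
    rw [cliquePoly, ← sum_filter_not_add_sum_filter _ (u ∈ ·), mul_sum]
    congr 1
    exact sum_congr rfl fun S hS => (mul_prod_erase S y (mem_filter.1 hS).2).symm
  rw [hsplit, hsplit x, cliquePolyPartial, Function.update_self]
  rw [sum_congr rfl fun S hS => prod_congr rfl fun i hi =>
      Function.update_of_ne (ne_of_mem_of_not_mem hi (mem_filter.1 hS).2) a x,
    sum_congr rfl fun S _ => prod_congr rfl fun i hi =>
      Function.update_of_ne (ne_of_mem_erase hi) a x]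
  ring

lemma cliquePolyPartial_update_of_not_adj (j : ℕ) {u v : V} (huv : u ≠ v) (hadj : ¬G.Adj u v)
    (x : V → ℝ) (a : ℝ) :
    cliquePolyPartial G j v (Function.update x u a) = cliquePolyPartial G j v x := by
  refine sum_congr rfl fun S hS => prod_congr rfl fun i hi => Function.update_of_ne ?_ a x
  rintro rfl
  obtain ⟨hS, hvS⟩ := mem_filter.1 hS
  exact hadj ((mem_cliqueFinset_iff.1 hS).isClique (mem_of_mem_erase hi) hvS huv)

lemma cliquePoly_update_update (j : ℕ) {u v : V} (huv : u ≠ v) (hadj : ¬G.Adj u v)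
    (x : V → ℝ) (a b : ℝ) :
    cliquePoly G j (Function.update (Function.update x u a) v b) =
      cliquePoly G j x + (a - x u) * cliquePolyPartial G j u x +
        (b - x v) * cliquePolyPartial G j v x := by
  rw [cliquePoly_update, cliquePoly_update, cliquePolyPartial_update_of_not_adj j huv hadj,
    Function.update_of_ne huv.symm]

end CliquePolynomial

namespace SimpleGraph

variable {V : Type*} {G : SimpleGraph V}

lemma Adj.isNClique_pair [DecidableEq V] {u w : V} (h : G.Adj u w) : G.IsNClique 2 {u, w} :=
  ⟨by simpa using fun _ => h, card_pair h.ne⟩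

lemma IsClique.card_le_of_cliqueFree_s12 {r : ℕ} (hG : G.CliqueFree (r + 1)) {T : Finset V}
    (hT : G.IsClique (T : Set V)) : #T ≤ r := by
  by_contra! hTr
  obtain ⟨U, hUT, hU⟩ := exists_subset_card_eq (show r + 1 ≤ #T by omega)
  exact hG U ⟨hT.subset (coe_subset.2 hUT), hU⟩

end SimpleGraph

section CliqueSupport

variable {V : Type*} [Fintype V] [DecidableEq V] {G : SimpleGraph V} [DecidableRel G.Adj]

lemma cliquePolyPartial_eq_zero_of_two {x : V → ℝ} (hx : 0 ≤ x) {u : V}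
    (h : cliquePolyPartial G 2 u x = 0) {s : ℕ} (hs : 2 ≤ s) :
    cliquePolyPartial G s u x = 0 := by
  have hnbr : ∀ w, G.Adj u w → x w = 0 := by
    intro w hw
    have hmem : {u, w} ∈ (G.cliqueFinset 2).filter (u ∈ ·) :=
      mem_filter.2 ⟨mem_cliqueFinset_iff.2 hw.isNClique_pair, mem_insert_self u _⟩
    have := (sum_eq_zero_iff_of_nonneg fun _ _ => prod_nonneg fun i _ => hx i).1 h _ hmem
    rwa [erase_insert (by simpa using hw.ne), prod_singleton] at this
  refine sum_eq_zero fun S hS => ?_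
  obtain ⟨hS, huS⟩ := mem_filter.1 hS
  obtain ⟨w, hw⟩ : (S.erase u).Nonempty := by
    rw [← card_pos, card_erase_of_mem huS, (mem_cliqueFinset_iff.1 hS).card_eq]
    omega
  exact prod_eq_zero hw <| hnbr w <|
    (mem_cliqueFinset_iff.1 hS).isClique huS (mem_of_mem_erase hw) (ne_of_mem_erase hw).symm

lemma cliquePoly_eq_esymm {x : V → ℝ} (hx : G.IsClique ({i | x i ≠ 0} : Finset V)) (j : ℕ) :
    cliquePoly G j x = esymm {i | x i ≠ 0} x j := by
  refine (sum_subset (fun A hA => ?_) fun S hSG hS => ?_).symm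
  · obtain ⟨hAT, hA⟩ := mem_powersetCard.1 hA
    exact mem_cliqueFinset_iff.2 ⟨hx.subset (coe_subset.2 hAT), hA⟩
  · obtain ⟨i, hiS, hiT⟩ := not_subset.1 fun hsub =>
      hS (mem_powersetCard.2 ⟨hsub, (mem_cliqueFinset_iff.1 hSG).card_eq⟩)
    exact prod_eq_zero hiS (by simpa using hiT)

end CliqueSupport

section Symmetrization

variable {V : Type*} [Fintype V] [DecidableEq V] {G : SimpleGraph V} [DecidableRel G.Adj]
  {s : ℕ} {x : V → ℝ}

lemma choose_two_pow_mul_cliquePoly_sq_le_of_isClique {r : ℕ} (hG : G.CliqueFree (r + 1))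
    (hs : 2 ≤ s) (hx : 0 ≤ x) (hcl : G.IsClique ({i | x i ≠ 0} : Finset V)) :
    (r.choose 2 : ℝ) ^ s * cliquePoly G s x ^ 2 ≤
      (r.choose s : ℝ) ^ 2 * cliquePoly G 2 x ^ s := by
  rw [cliquePoly_eq_esymm hcl, cliquePoly_eq_esymm hcl]
  exact choose_two_pow_mul_esymm_sq_le (fun i hi => (hx i).lt_of_ne' (mem_filter.1 hi).2) hs
    (hcl.card_le_of_cliqueFree_s12 hG)

lemma exists_support_lt_of_shift (hx : 0 ≤ x) {u v : V} (huv : u ≠ v) (hadj : ¬G.Adj u v)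
    (hu : x u ≠ 0) (hv : x v ≠ 0) {t : ℝ} (ht : 0 ≤ t)
    (h₂ : t * cliquePolyPartial G 2 u x = x v * cliquePolyPartial G 2 v x)
    (hₛ : x v * cliquePolyPartial G s v x ≤ t * cliquePolyPartial G s u x) :
    ∃ y, 0 ≤ y ∧ #{i | y i ≠ 0} < #({i | x i ≠ 0} : Finset V) ∧
      cliquePoly G 2 y = cliquePoly G 2 x ∧ cliquePoly G s x ≤ cliquePoly G s y := by
  refine ⟨Function.update (Function.update x u (x u + t)) v 0, fun i => ?_, ?_, ?_, ?_⟩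
  · simp only [Function.update_apply, Pi.zero_apply]
    split_ifs
    exacts [le_rfl, add_nonneg (hx u) ht, hx i]
  · refine (card_le_card fun i hi => ?_).trans_lt
      (card_erase_lt_of_mem (a := v) (by simpa using hv))
    have hi := (mem_filter.1 hi).2
    simp only [Function.update_apply] at hi
    split_ifs at hi with hiv hiu
    · exact absurd rfl hi
    · exact mem_erase.2 ⟨hiv, by simpa [hiu] using hu⟩
    · exact mem_erase.2 ⟨hiv, by simpa using hi⟩
  · rw [cliquePoly_update_update 2 huv hadj]
    linear_combination h₂
  · rw [cliquePoly_update_update s huv hadj]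
    linarith

lemma exists_support_lt_of_not_isClique (hx : 0 ≤ x) (hs : 2 ≤ s)
    (hcl : ¬G.IsClique ({i | x i ≠ 0} : Finset V)) :
    ∃ y, 0 ≤ y ∧ #{i | y i ≠ 0} < #({i | x i ≠ 0} : Finset V) ∧
      cliquePoly G 2 y = cliquePoly G 2 x ∧ cliquePoly G s x ≤ cliquePoly G s y := by
  obtain ⟨u, hu, v, hv, huv, hadj⟩ :
      ∃ u, x u ≠ 0 ∧ ∃ v, x v ≠ 0 ∧ u ≠ v ∧ ¬G.Adj u v := by
    simpa [SimpleGraph.isClique_iff, Set.Pairwise] using hcl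
  have hxu : 0 ≤ x u := hx u
  have hxv : 0 ≤ x v := hx v
  rcases (cliquePolyPartial_nonneg (G := G) 2 u hx).eq_or_lt with hEu | hEu
  · refine exists_support_lt_of_shift hx huv.symm (fun h => hadj h.symm) hv hu le_rfl
      (by rw [← hEu]; ring) ?_
    rw [cliquePolyPartial_eq_zero_of_two hx hEu.symm hs]
    simp
  rcases (cliquePolyPartial_nonneg (G := G) 2 v hx).eq_or_lt with hEv | hEv
  · refine exists_support_lt_of_shift hx huv hadj hu hv le_rfl (by rw [← hEv]; ring) ?_
    rw [cliquePolyPartial_eq_zero_of_two hx hEv.symm hs]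
    simp
  rcases le_total (cliquePolyPartial G 2 u x * cliquePolyPartial G s v x)
    (cliquePolyPartial G 2 v x * cliquePolyPartial G s u x) with h | h
  · refine exists_support_lt_of_shift hx huv hadj hu hv
      (t := x v * cliquePolyPartial G 2 v x / cliquePolyPartial G 2 u x) (by positivity)
      (by field_simp) ?_
    rw [div_mul_eq_mul_div, le_div_iff₀ hEu]
    nlinarith [mul_le_mul_of_nonneg_left h hxv]
  · refine exists_support_lt_of_shift hx huv.symm (fun h => hadj h.symm) hv hu
      (t := x u * cliquePolyPartial G 2 u x / cliquePolyPartial G 2 v x) (by positivity)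
      (by field_simp) ?_
    rw [div_mul_eq_mul_div, le_div_iff₀ hEv]
    nlinarith [mul_le_mul_of_nonneg_left h hxu]

theorem exists_isClique_support (hs : 2 ≤ s) (hx : 0 ≤ x) :
    ∃ y, 0 ≤ y ∧ G.IsClique ({i | y i ≠ 0} : Finset V) ∧
      cliquePoly G 2 y = cliquePoly G 2 x ∧ cliquePoly G s x ≤ cliquePoly G s y := by
  induction h : #({i | x i ≠ 0} : Finset V) using Nat.strong_induction_on generalizing x with
  | _ k ih =>
    by_cases hcl : G.IsClique ({i | x i ≠ 0} : Finset V)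
    · exact ⟨x, hx, hcl, rfl, le_rfl⟩
    obtain ⟨y, hy, hcard, hy₂, hyₛ⟩ := exists_support_lt_of_not_isClique hx hs hcl
    obtain ⟨z, hz, hzcl, hz₂, hzₛ⟩ := ih _ (h ▸ hcard) hy rfl
    exact ⟨z, hz, hzcl, hz₂.trans hy₂, hyₛ.trans hzₛ⟩

end Symmetrization

section KhadzhievNikiforov

variable {V : Type*} [Fintype V] [DecidableEq V] {G : SimpleGraph V} [DecidableRel G.Adj]
  {r s : ℕ}

theorem choose_two_pow_mul_cliquePoly_sq_le (hG : G.CliqueFree (r + 1)) (hs : 2 ≤ s)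
    {x : V → ℝ} (hx : 0 ≤ x) :
    (r.choose 2 : ℝ) ^ s * cliquePoly G s x ^ 2 ≤
      (r.choose s : ℝ) ^ 2 * cliquePoly G 2 x ^ s := by
  obtain ⟨y, hy, hcl, hy₂, hyₛ⟩ := exists_isClique_support (G := G) hs hx
  calc (r.choose 2 : ℝ) ^ s * cliquePoly G s x ^ 2
      ≤ (r.choose 2 : ℝ) ^ s * cliquePoly G s y ^ 2 := by
        gcongr
        exact cliquePoly_nonneg s hx
    _ ≤ (r.choose s : ℝ) ^ 2 * cliquePoly G 2 y ^ s :=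
        choose_two_pow_mul_cliquePoly_sq_le_of_isClique hG hs hy hcl
    _ = (r.choose s : ℝ) ^ 2 * cliquePoly G 2 x ^ s := by rw [hy₂]

lemma cliquePoly_one (j : ℕ) : cliquePoly G j 1 = #(G.cliqueFinset j) := by
  simp [cliquePoly]

lemma card_edgeFinset_eq_card_cliqueFinset_two : #G.edgeFinset = #(G.cliqueFinset 2) := by
  refine card_bij (fun e _ => e.toFinset) (fun e he => ?_) (fun e _ f _ hef => ?_) fun S hS => ?_
  · induction e using Sym2.ind with
    | h a b =>
      rw [Sym2.toFinset_mk_eq]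
      exact mem_cliqueFinset_iff.2 (by simpa using he : G.Adj a b).isNClique_pair
  · exact Sym2.ext fun a => by rw [← Sym2.mem_toFinset, hef, Sym2.mem_toFinset]
  · have hS := mem_cliqueFinset_iff.1 hS
    obtain ⟨a, b, hab, rfl⟩ := card_eq_two.1 hS.card_eq
    exact ⟨s(a, b), by simpa using hS.isClique (by simp) (by simp) hab, Sym2.toFinset_mk_eq⟩

theorem choose_two_pow_mul_card_cliqueFinset_sq_le (hG : G.CliqueFree (r + 1)) (hs : 2 ≤ s) :
    (r.choose 2 : ℝ) ^ s * #(G.cliqueFinset s) ^ 2 ≤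
      (r.choose s : ℝ) ^ 2 * #G.edgeFinset ^ s := by
  have := choose_two_pow_mul_cliquePoly_sq_le hG hs (x := 1) zero_le_one
  rwa [cliquePoly_one, cliquePoly_one, ← card_edgeFinset_eq_card_cliqueFinset_two] at this

end KhadzhievNikiforov

theorem choose_two_mul_rpow_le_card_edgeFinset {V : Type*} [Fintype V] [DecidableEq V]
    {G : SimpleGraph V} [DecidableRel G.Adj] {r s : ℕ} (hG : G.CliqueFree (r + 1))
    (hs : 2 ≤ s) :
    (r.choose 2 : ℝ) * (#(G.cliqueFinset s) / r.choose s : ℝ) ^ ((2 : ℝ) / s) ≤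
      #G.edgeFinset := by
  have hs₀ : (s : ℝ) ≠ 0 := by positivity
  refine (pow_le_pow_iff_left₀ (by positivity) (by positivity) (by omega : s ≠ 0)).1 ?_
  rw [mul_pow, ← Real.rpow_mul_natCast (by positivity), div_mul_cancel₀ _ hs₀, Real.rpow_two,
    div_pow]
  rw [← mul_div_assoc]
  refine div_le_of_le_mul₀ (by positivity) (by positivity) ?_
  linarith [choose_two_pow_mul_card_cliqueFinset_sq_le hG hs]

lemma card_edgeFinset_turanGraph_le {n r : ℕ} (hr : 0 < r) :
    (#(turanGraph n r).edgeFinset : ℝ) ≤ r.choose 2 * (n / r : ℝ) ^ 2 := by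
  have h : ((2 * r * #(turanGraph n r).edgeFinset : ℕ) : ℝ) ≤ ((r - 1) * n ^ 2 : ℕ) := by
    exact_mod_cast mul_card_edgeFinset_turanGraph_le
  push_cast [Nat.cast_sub hr] at h
  have hr' : (0 : ℝ) < r := by exact_mod_cast hr
  rw [Nat.cast_choose_two, show (r * (r - 1) / 2 * (n / r) ^ 2 : ℝ) = (r - 1) * n ^ 2 / (2 * r) by
    field_simp, le_div_iff₀ (by positivity)]
  linarith

lemma rpow_sub_rpow_le_max_sub_rpow {a b p : ℝ} (ha : 0 ≤ a) (hb : 0 ≤ b) (hp : 0 ≤ p)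
    (hp1 : p ≤ 1) : a ^ p - b ^ p ≤ max (a - b) 0 ^ p := by
  have : a ^ p ≤ (max (a - b) 0 + b) ^ p := by gcongr; linarith [le_max_left (a - b) 0]
  linarith [Real.rpow_add_le_add_rpow (le_max_right (a - b) 0) hb hp hp1]

lemma cliqueCount_eq_card_cliqueFinset {n : ℕ} (G : SimpleGraph (Fin n)) (s : ℕ) :
    cliqueCount G s = #(G.cliqueFinset s) := by
  rw [cliqueCount, ← Set.ncard_coe_finset, coe_cliqueFinset]
  rfl

theorem stmt_12_general (r s n : ℕ) (hs : 2 ≤ s) (hsr : s ≤ r) (δ : ℝ) (hδ : 0 ≤ δ)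
    (G : SimpleGraph (Fin n)) (hG : G.CliqueFree (r + 1))
    (hks : (r.choose s : ℝ) * ((n : ℝ) / r) ^ s - δ * (n : ℝ) ^ s ≤ (cliqueCount G s : ℝ)) :
    ((turanGraph n r).edgeSet.ncard : ℝ) -
        (r.choose 2 : ℝ) * (δ / (r.choose s : ℝ)) ^ ((2 : ℝ) / s) * (n : ℝ) ^ 2 ≤
      (G.edgeSet.ncard : ℝ) := by
  have hC : (0 : ℝ) < r.choose s := by exact_mod_cast Nat.choose_pos hsr
  have hp : (2 : ℝ) / s ≤ 1 := by rw [div_le_one (by positivity)]; exact_mod_cast hs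
  have hpow : ∀ c : ℝ, 0 ≤ c → (c ^ s) ^ ((2 : ℝ) / s) = c ^ 2 := fun c hc => by
    rw [← Real.rpow_natCast_mul hc, mul_div_cancel₀ _ (by positivity), Real.rpow_two]
  set a := ((n : ℝ) / r) ^ s
  set b := δ / r.choose s * (n : ℝ) ^ s
  have hdensity : a - b ≤ #(G.cliqueFinset s) / r.choose s := by
    rw [le_div_iff₀ hC, ← cliqueCount_eq_card_cliqueFinset]
    linarith [show (a - b) * r.choose s = r.choose s * a - δ * n ^ s by simp only [b]; field_simp]
  rw [← coe_edgeFinset, ← coe_edgeFinset, Set.ncard_coe_finset, Set.ncard_coe_finset]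
  calc (#(turanGraph n r).edgeFinset : ℝ) -
        r.choose 2 * (δ / r.choose s) ^ ((2 : ℝ) / s) * n ^ 2
      ≤ r.choose 2 * (a ^ ((2 : ℝ) / s) - b ^ ((2 : ℝ) / s)) := by
        rw [Real.mul_rpow (by positivity) (by positivity), hpow _ (by positivity),
          hpow _ (by positivity)]
        linarith [card_edgeFinset_turanGraph_le (n := n) (by omega : 0 < r)]
    _ ≤ r.choose 2 * max (a - b) 0 ^ ((2 : ℝ) / s) := by
        gcongr
        exact rpow_sub_rpow_le_max_sub_rpow (by positivity) (by positivity) (by positivity) hp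
    _ ≤ r.choose 2 * (#(G.cliqueFinset s) / r.choose s : ℝ) ^ ((2 : ℝ) / s) := by
        gcongr
        exact max_le hdensity (by positivity)
    _ ≤ #G.edgeFinset := choose_two_mul_rpow_le_card_edgeFinset hG hs

/-- A `K_{r+1}`-free graph with many `s`-cliques has many edges. -/
theorem stmt_12 (r s n : ℕ) (hr : 2 ≤ r) (hs : 2 ≤ s) (hsr : s ≤ r) (δ : ℝ) (hδ : 0 ≤ δ)
    (G : SimpleGraph (Fin n)) (hG : G.CliqueFree (r + 1))
    (hks : (r.choose s : ℝ) * ((n : ℝ) / r) ^ s - δ * (n : ℝ) ^ s ≤ (cliqueCount G s : ℝ)) :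
    ((turanGraph n r).edgeSet.ncard : ℝ) -
        (r.choose 2 : ℝ) * (δ / (r.choose s : ℝ)) ^ ((2 : ℝ) / s) * (n : ℝ) ^ 2 ≤
      (G.edgeSet.ncard : ℝ) :=
  stmt_12_general r s n hs hsr δ hδ G hG hks
end

section
/- Let r ≥ 2 be an integer. If G is a K_{r+1}-free graph on n ≥ 1 vertices, then the minimum degree satisfies δ(G) ≤ n − ⌈n/r⌉, i.e. δ(G) ≤ δ(T_r(n)). -/
open SimpleGraph Matrix
open scoped Classical

/-!
If `δ = δ(G)`, every vertex has at most `n - δ` non-neighbours, so any `i` vertices have at least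
`n - i (n - δ)` common neighbours. If `r (n - δ) < n`, a clique can therefore be extended greedily
one vertex at a time up to `r + 1` vertices. Hence a `K_{r+1}`-free graph has `n ≤ r (n - δ)`,
i.e. `⌈n/r⌉ ≤ n - δ`. In `T_r(n)` the non-neighbours of a vertex form its own part, a residue
class of size at most `⌈n/r⌉`.
-/

open Finset

-- A residue class mod `r` meets each block `[q r, q r + r)` once, and `Fin n` spans `⌈n/r⌉` blocks.
lemma Fin.card_filter_mod_eq_le_ceilDiv {n r : ℕ} (hr : 0 < r) (c : ℕ) :
    #{u : Fin n | (u : ℕ) % r = c} ≤ n ⌈/⌉ r := by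
  refine (card_le_card_of_injOn (fun u : Fin n => (u : ℕ) / r) (t := range (n ⌈/⌉ r))
    (fun u _ => ?_) fun u hu w hw huw => ?_).trans_eq (card_range _)
  · have : n ≤ r * (n ⌈/⌉ r) := le_smul_ceilDiv hr
    rw [coe_range, Set.mem_Iio, Nat.div_lt_iff_lt_mul hr]
    grind
  · simp only [coe_filter, mem_univ, true_and, Set.mem_ofPred_eq] at hu hw
    exact Fin.ext (Nat.ext_div_mod huw (hu.trans hw.symm))

namespace SimpleGraph

variable {V : Type*} [Fintype V] (G : SimpleGraph V) [DecidableRel G.Adj]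

lemma card_le_card_filter_forall_adj_add (S : Finset V) :
    Fintype.card V ≤ #{u | ∀ s ∈ S, G.Adj s u} + #S * (Fintype.card V - G.minDegree) := by
  have hmissed : #{u | ¬ ∀ s ∈ S, G.Adj s u} ≤ #S * (Fintype.card V - G.minDegree) := calc
    _ ≤ #(S.biUnion fun s => (G.neighborFinset s)ᶜ) := by
      refine card_le_card fun u hu => ?_
      simp only [mem_filter, mem_univ, true_and, not_forall] at hu
      obtain ⟨s, hs, hsu⟩ := hu
      exact mem_biUnion.2 ⟨s, hs, by simpa using hsu⟩
    _ ≤ ∑ s ∈ S, #(G.neighborFinset s)ᶜ := card_biUnion_le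
    _ ≤ #S * (Fintype.card V - G.minDegree) := by
      refine (sum_le_card_nsmul S _ _ fun s _ => ?_).trans_eq (smul_eq_mul _ _)
      rw [card_compl, card_neighborFinset_eq_degree]
      exact Nat.sub_le_sub_left (G.minDegree_le_degree s) _
  have hsplit := card_filter_add_card_filter_not (s := univ) (fun u => ∀ s ∈ S, G.Adj s u)
  rw [card_univ] at hsplit
  omega

variable {G}

lemma CliqueFree.card_le_mul_card_sub_minDegree {r : ℕ} (hG : G.CliqueFree (r + 1)) :
    Fintype.card V ≤ r * (Fintype.card V - G.minDegree) := by
  by_contra! hsmall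
  suffices ∀ i ≤ r + 1, ∃ S : Finset V, G.IsNClique i S by
    obtain ⟨S, hS⟩ := this (r + 1) le_rfl
    exact hG S hS
  intro i hi
  induction i with
  | zero => exact ⟨∅, isNClique_empty.2 rfl⟩
  | succ i ih =>
    obtain ⟨S, hS⟩ := ih (by omega)
    have hcommon := G.card_le_card_filter_forall_adj_add S
    have hsmaller : #S * (Fintype.card V - G.minDegree) ≤ r * (Fintype.card V - G.minDegree) :=
      Nat.mul_le_mul_right _ (hS.card_eq ▸ by omega)
    obtain ⟨v, hv⟩ : (filter (fun u => ∀ s ∈ S, G.Adj s u) univ).Nonempty :=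
      card_pos.1 (by omega)
    exact ⟨insert v S, hS.insert fun s hs => ((mem_filter.1 hv).2 s hs).symm⟩

lemma CliqueFree.minDegree_le_card_sub_ceilDiv {r : ℕ} (hr : 0 < r) (hG : G.CliqueFree (r + 1)) :
    G.minDegree ≤ Fintype.card V - Fintype.card V ⌈/⌉ r := by
  have hceil : Fintype.card V ⌈/⌉ r ≤ Fintype.card V - G.minDegree :=
    (ceilDiv_le_iff_le_mul hr).2 hG.card_le_mul_card_sub_minDegree
  have : G.minDegree ≤ Fintype.card V := by
    cases isEmpty_or_nonempty V
    · simp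
    · exact G.minDegree_lt_card.le
  omega

lemma degree_turanGraph {n r : ℕ} (v : Fin n) :
    (turanGraph n r).degree v = n - #{u : Fin n | (u : ℕ) % r = v % r} := by
  have hnbr : (turanGraph n r).neighborFinset v =
      univ.filter fun u : Fin n => ¬ (u : ℕ) % r = v % r := by
    ext u
    simp [turanGraph_adj, eq_comm]
  have hsplit := card_filter_add_card_filter_not (s := univ) (fun u : Fin n => (u : ℕ) % r = v % r)
  rw [card_univ, Fintype.card_fin] at hsplit
  rw [← card_neighborFinset_eq_degree, hnbr]
  omega

lemma sub_ceilDiv_le_minDegree_turanGraph {n r : ℕ} (hr : 0 < r) :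
    n - n ⌈/⌉ r ≤ (turanGraph n r).minDegree := by
  obtain rfl | hn := n.eq_zero_or_pos
  · simp
  have := Fin.pos_iff_nonempty.1 hn
  refine le_minDegree_of_forall_le_degree _ _ fun v => ?_
  rw [degree_turanGraph]
  exact Nat.sub_le_sub_left (Fin.card_filter_mod_eq_le_ceilDiv hr _) n

end SimpleGraph

lemma minDeg_eq_minDegree {n : ℕ} (G : SimpleGraph (Fin n)) [DecidableRel G.Adj] :
    minDeg G = G.minDegree := by
  have hdeg : (fun v => {u | G.Adj v u}.ncard) = fun v => G.degree v := by
    ext v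
    rw [← card_neighborFinset_eq_degree, ← Set.ncard_coe_finset, coe_neighborFinset]
    rfl
  rw [minDeg, hdeg]
  obtain rfl | hn := n.eq_zero_or_pos
  · simp
  have := Fin.pos_iff_nonempty.1 hn
  obtain ⟨v, hv⟩ := G.exists_minimal_degree_vertex
  exact le_antisymm (csInf_le (OrderBot.bddBelow _) ⟨v, hv.symm⟩)
    (le_csInf (Set.range_nonempty _) (Set.forall_mem_range.2 G.minDegree_le_degree))

theorem stmt_18_general (r n : ℕ) (hr : 2 ≤ r) (G : SimpleGraph (Fin n))
    (hG : G.CliqueFree (r + 1)) :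
    minDeg G ≤ n - (n + r - 1) / r ∧ minDeg G ≤ minDeg (turanGraph n r) := by
  rw [← Nat.ceilDiv_eq_add_pred_div]
  have hr₀ : 0 < r := by omega
  have hδ : minDeg G ≤ n - n ⌈/⌉ r := by
    simpa [minDeg_eq_minDegree] using hG.minDegree_le_card_sub_ceilDiv hr₀
  refine ⟨hδ, hδ.trans ?_⟩
  rw [minDeg_eq_minDegree]
  exact sub_ceilDiv_le_minDegree_turanGraph hr₀

/-- Degree version of Turán's theorem. -/
theorem stmt_18 (r n : ℕ) (hr : 2 ≤ r) (hn : 1 ≤ n) (G : SimpleGraph (Fin n))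
    (hG : G.CliqueFree (r + 1)) :
    minDeg G ≤ n - (n + r - 1) / r ∧ minDeg G ≤ minDeg (turanGraph n r) :=
  stmt_18_general r n hr G hG
end
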